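/- arXiv:1611.06371 — 8 statements merged into one kernel-verified Lean document; each statement's English description precedes it below -/
import Mathlib

section
/- Let q be an odd prime power and let n be an odd integer with n ≥ 3 and n dividing (q-1)/2. Then for every integer λ with 0 ≤ λ ≤ (n-3)/2 there exists a negacyclic LCD code over F_q of length n, dimension n - 2λ - 1 and minimum distance exactly 2(λ + 1); in particular this code is MDS. -/
open Finset

/-- The negacyclic shift of a word: `(c_0, ..., c_{n-1}) ↦ (-c_{n-1}, c_0, ..., c_{n-2})`. -/
def negashift {F : Type*} [Neg F] {n : ℕ} (c : Fin n → F) : Fin n → F :=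
  fun i =>
    if _h : (i : ℕ) = 0 then -c ⟨n - 1, Nat.sub_lt i.pos Nat.one_pos⟩
    else c ⟨(i : ℕ) - 1, lt_of_le_of_lt (Nat.sub_le _ _) i.isLt⟩

/-- A linear code `C ≤ F^n` is negacyclic if it is closed under the negacyclic shift. -/
def IsNegacyclic {F : Type*} [Field F] {n : ℕ} (C : Submodule F (Fin n → F)) : Prop :=
  ∀ c ∈ C, negashift c ∈ C

/-- `C` is an LCD code: `C ∩ C^⊥ = {0}` for the Euclidean inner product. -/
def IsLCD {F : Type*} [Field F] {n : ℕ} (C : Submodule F (Fin n → F)) : Prop :=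
  ∀ x ∈ C, (∀ y ∈ C, ∑ i, x i * y i = 0) → x = 0

/-- `C` is a Hermitian LCD code: `C ∩ C^{⊥H} = {0}` for the Hermitian inner product
`⟨x, y⟩ = ∑ x_i y_i^q`. -/
def IsHermLCD (q : ℕ) {F : Type*} [Field F] {n : ℕ} (C : Submodule F (Fin n → F)) : Prop :=
  ∀ x ∈ C, (∀ y ∈ C, ∑ i, x i * (y i) ^ q = 0) → x = 0

open scoped Classical in
/-- The Hamming weight of a word. -/
noncomputable def wt {F : Type*} [Zero F] {n : ℕ} (c : Fin n → F) : ℕ :=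
  (Finset.univ.filter fun i => c i ≠ 0).card

/-- The minimum distance of the code `C` is exactly `d`: `d` is the least Hamming weight
of a nonzero codeword. -/
def HasMinDist {F : Type*} [Zero F] {n : ℕ} (C : Set (Fin n → F)) (d : ℕ) : Prop :=
  IsLeast {w : ℕ | ∃ c ∈ C, c ≠ 0 ∧ wt c = w} d

/-!
Write `n = 2r + 1`. As `2n ∣ q - 1` there is a primitive `2n`-th root of unity `ζ`, and the roots
of `Xⁿ + 1` are the distinct elements `β j = ζ ^ (2j + 1)`, `j < n`. The code consists of the words
whose polynomial vanishes at `β j` for `j ∈ S = [r - λ, r + λ]`. Since `β j ^ n = -1` it is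
negacyclic, and since evaluation at all the `β j` is an invertible Vandermonde map, its dimension is
`n - |S|`. The set `S` is symmetric under `j ↦ n - 1 - j`; as `∑ᵢ (β j * β k) ^ i = 0` unless
`j + k + 1 = n`, every row `(β j ^ i)ᵢ` with `j ∉ S` is a codeword, so a word orthogonal to the code
vanishes at all `β j` and is zero: the code is LCD. Finally the `β j`, `j ∈ S`, are consecutive
powers of `ζ ^ 2` up to a common factor, so the BCH bound gives every nonzero codeword weight
`> |S|`, while the coefficients of `∏_{j ∈ S} (X - β j)` form a codeword of weight `≤ |S| + 1`.
-/

open Polynomial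

section Negashift

variable {F : Type*} {n : ℕ}

theorem negashift_zero [Neg F] (c : Fin (n + 1) → F) : negashift c 0 = -c (Fin.last n) := by
  simp [negashift, Fin.last]

theorem negashift_succ [Neg F] (c : Fin (n + 1) → F) (i : Fin n) :
    negashift c i.succ = c i.castSucc := by
  simp [negashift, Fin.castSucc, Fin.castAdd, Fin.castLE]

theorem sum_pow_mul_negashift [CommRing F] {x : F} (hx : x ^ n = -1) (c : Fin n → F) :
    ∑ i : Fin n, x ^ (i : ℕ) * negashift c i = x * ∑ i : Fin n, x ^ (i : ℕ) * c i := by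
  cases n with
  | zero => simp
  | succ m =>
    rw [Fin.sum_univ_succ, Fin.sum_univ_castSucc, mul_add, Finset.mul_sum]
    simp only [negashift_zero, negashift_succ, Fin.val_zero, Fin.val_succ, Fin.val_castSucc,
      Fin.val_last, ← mul_assoc, ← pow_succ', hx]
    ring

end Negashift

section ZeroCode

variable {F : Type*} [Field F] {n : ℕ}

def zeroCode (β : Fin n → F) (S : Finset (Fin n)) : Submodule F (Fin n → F) :=
  LinearMap.ker (LinearMap.funLeft F F ((↑) : S → Fin n) ∘ₗ (Matrix.vandermonde β).mulVecLin)

theorem mem_zeroCode {β : Fin n → F} {S : Finset (Fin n)} {c : Fin n → F} :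
    c ∈ zeroCode β S ↔ ∀ j ∈ S, ∑ i : Fin n, β j ^ (i : ℕ) * c i = 0 := by
  simp [zeroCode, funext_iff, Matrix.mulVec, dotProduct, Matrix.vandermonde_apply]

theorem isNegacyclic_zeroCode {β : Fin n → F} (hβ : ∀ j, β j ^ n = -1) (S : Finset (Fin n)) :
    IsNegacyclic (zeroCode β S) := by
  intro c hc
  rw [mem_zeroCode] at hc ⊢
  intro j hj
  rw [sum_pow_mul_negashift (hβ j), hc j hj, mul_zero]

theorem finrank_zeroCode {β : Fin n → F} (hβ : Function.Injective β) (S : Finset (Fin n)) :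
    Module.finrank F (zeroCode β S) = n - #S := by
  let Φ : (Fin n → F) →ₗ[F] (S → F) :=
    LinearMap.funLeft F F ((↑) : S → Fin n) ∘ₗ (Matrix.vandermonde β).mulVecLin
  have hΦ : Function.Surjective Φ :=
    (LinearMap.funLeft_surjective_of_injective (R := F) (M := F) _ Subtype.val_injective).comp
      (Matrix.mulVec_surjective_iff_isUnit.2 <| (Matrix.isUnit_iff_isUnit_det _).2 <|
        (Matrix.det_vandermonde_ne_zero_iff.2 hβ).isUnit)
  have := LinearMap.finrank_range_add_finrank_ker Φ
  rw [LinearMap.range_eq_top.2 hΦ, finrank_top, Module.finrank_fintype_fun_eq_card,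
    Fintype.card_coe, Module.finrank_fin_fun] at this
  change Module.finrank F (LinearMap.ker Φ) = _
  omega

theorem isLCD_zeroCode {β : Fin n → F} (hβ : Function.Injective β) {S : Finset (Fin n)}
    (hS : ∀ j ∉ S, ∀ k ∈ S, ∑ i : Fin n, β k ^ (i : ℕ) * β j ^ (i : ℕ) = 0) :
    IsLCD (zeroCode β S) := by
  intro x hx horth
  refine Matrix.eq_zero_of_forall_index_sum_pow_mul_eq_zero hβ fun j => ?_
  by_cases hj : j ∈ S
  · exact mem_zeroCode.1 hx j hj
  · have hrow : (fun i : Fin n => β j ^ (i : ℕ)) ∈ zeroCode β S :=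
      mem_zeroCode.2 fun k hk => hS j hj k hk
    simpa only [mul_comm] using horth _ hrow

theorem exists_mem_zeroCode_wt_le (β : Fin n → F) {S : Finset (Fin n)} (hS : #S < n) :
    ∃ c ∈ zeroCode β S, c ≠ 0 ∧ wt c ≤ #S + 1 := by
  classical
  set g : F[X] := ∏ j ∈ S, (X - C (β j))
  have hdeg : g.natDegree = #S := natDegree_finsetProd_X_sub_C_eq_card S β
  refine ⟨fun i : Fin n => g.coeff i, mem_zeroCode.2 fun j hj => ?_, fun h => ?_, ?_⟩
  · rw [Fin.sum_univ_eq_sum_range (fun i => β j ^ i * g.coeff i)]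
    simp only [mul_comm (β j ^ _)]
    rw [← eval_eq_sum_range' (hdeg ▸ hS), eval_prod]
    exact prod_eq_zero hj (by simp)
  · have hlead : g.coeff #S = 1 := hdeg ▸ (monic_prod_X_sub_C β S).coeff_natDegree
    simpa [hlead] using congrFun h ⟨#S, hS⟩
  · unfold wt
    calc #{i : Fin n | g.coeff i ≠ 0} ≤ #(range (#S + 1)) :=
          card_le_card_of_injOn (fun i => (i : ℕ)) (fun i hi => mem_range.2 <|
            Nat.lt_succ_of_le <| hdeg ▸ le_natDegree_of_ne_zero (mem_filter.1 hi).2)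
            Fin.val_injective.injOn
      _ = #S + 1 := card_range _

theorem lt_wt_of_sum_pow_mul_eq_zero {x v : Fin n → F} (hx : Function.Injective x) (hv : v ≠ 0)
    {w : ℕ} (h : ∀ t < w, ∑ i, x i ^ t * v i = 0) : w < wt v := by
  classical
  by_contra! hle
  set T : Finset (Fin n) := {i | v i ≠ 0}
  have hT : #T ≤ w := hle
  -- On the support `T`, the first `#T` equations form an invertible Vandermonde system.
  let e : Fin #T ≃ T := T.equivFin.symm
  have hvT : (fun k => v (e k)) = 0 := by
    refine Matrix.eq_zero_of_forall_pow_sum_mul_pow_eq_zero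
      (f := fun k => x (e k)) (hx.comp (Subtype.val_injective.comp e.injective)) fun t => ?_
    calc ∑ k, v (e k) * x (e k) ^ (t : ℕ) = ∑ i ∈ T, v i * x i ^ (t : ℕ) :=
          (e.sum_comp fun i : T => v i * x i ^ (t : ℕ)).trans
            (sum_coe_sort T fun i => v i * x i ^ (t : ℕ))
      _ = ∑ i, x i ^ (t : ℕ) * v i := by
          rw [sum_filter_of_ne fun i _ hi => left_ne_zero_of_mul hi]
          simp only [mul_comm]
      _ = 0 := h t (t.2.trans_le hT)
  obtain ⟨i, hi⟩ := Function.ne_iff.1 hv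
  have hiT : i ∈ T := by simpa [T] using hi
  exact hi (by simpa using congrFun hvT (e.symm ⟨i, hiT⟩))

theorem lt_wt_of_consecutive_zeros {α γ : F} (hα : α ≠ 0)
    (hγ : Function.Injective fun i : Fin n => γ ^ (i : ℕ)) {c : Fin n → F} (hc : c ≠ 0) {w : ℕ}
    (h : ∀ t < w, ∑ i : Fin n, (α * γ ^ t) ^ (i : ℕ) * c i = 0) : w < wt c := by
  have hwt : wt (fun i : Fin n => α ^ (i : ℕ) * c i) = wt c := by
    unfold wt
    congr 1
    ext i
    simp [hα]
  rw [← hwt]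
  refine lt_wt_of_sum_pow_mul_eq_zero hγ (fun h0 => hc (funext fun i => ?_)) fun t ht => ?_
  · simpa [hα] using congrFun h0 i
  · rw [← h t ht]
    refine sum_congr rfl fun i _ => ?_
    ring

end ZeroCode

section OddPowers

variable {F : Type*} [Field F] {n : ℕ} {ζ : F}

def oddPowers (ζ : F) (n : ℕ) (j : Fin n) : F := ζ ^ (2 * (j : ℕ) + 1)

theorem oddPowers_pow_eq_neg_one (hζ : IsPrimitiveRoot ζ (2 * n)) (j : Fin n) :
    oddPowers ζ n j ^ n = -1 := by
  have hζn : ζ ^ n = -1 :=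
    (hζ.pow (by have := j.2; omega) (mul_comm 2 n)).eq_neg_one_of_two_right
  rw [oddPowers, ← pow_mul, mul_comm, pow_mul, hζn, Odd.neg_one_pow ⟨j, rfl⟩]

theorem oddPowers_injective (hζ : IsPrimitiveRoot ζ (2 * n)) :
    Function.Injective (oddPowers ζ n) := fun j k h =>
  Fin.ext (by have := hζ.pow_inj (by omega) (by omega) h; omega)

theorem sum_oddPowers_pow_mul_pow_eq_zero (hζ : IsPrimitiveRoot ζ (2 * n)) {j k : Fin n}
    (hjk : (j : ℕ) + k + 1 ≠ n) :
    ∑ i : Fin n, oddPowers ζ n j ^ (i : ℕ) * oddPowers ζ n k ^ (i : ℕ) = 0 := by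
  set ω := ζ ^ (2 * ((j : ℕ) + k + 1))
  have hω : ω ^ n = 1 := by
    rw [← pow_mul, mul_right_comm, pow_mul, hζ.pow_eq_one, one_pow]
  have hω1 : ω ≠ 1 := by
    rw [Ne, hζ.pow_eq_one_iff_dvd, Nat.mul_dvd_mul_iff_left two_pos]
    rintro ⟨m, hm⟩
    have : m < 2 := Nat.lt_of_mul_lt_mul_left (a := n) (by omega)
    interval_cases m <;> omega
  calc ∑ i : Fin n, oddPowers ζ n j ^ (i : ℕ) * oddPowers ζ n k ^ (i : ℕ)
      = ∑ i ∈ range n, ω ^ i := by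
        rw [← Fin.sum_univ_eq_sum_range]
        refine sum_congr rfl fun i _ => ?_
        simp only [ω, oddPowers, ← pow_add, ← pow_mul]
        ring_nf
    _ = 0 := by rw [geom_sum_eq hω1, hω, sub_self, zero_div]

theorem isLCD_zeroCode_Icc (hζ : IsPrimitiveRoot ζ (2 * n)) {a b : Fin n}
    (hab : (a : ℕ) + b + 1 = n) : IsLCD (zeroCode (oddPowers ζ n) (Icc a b)) :=
  isLCD_zeroCode (oddPowers_injective hζ) fun j hj k hk =>
    sum_oddPowers_pow_mul_pow_eq_zero hζ (by simp only [mem_Icc, Fin.le_def] at hj hk; omega)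

theorem lt_wt_of_mem_zeroCode_Icc (hζ : IsPrimitiveRoot ζ (2 * n)) {a b : Fin n}
    {c : Fin n → F} (hc : c ∈ zeroCode (oddPowers ζ n) (Icc a b)) (hc0 : c ≠ 0) :
    #(Icc a b) < wt c := by
  refine lt_wt_of_consecutive_zeros (α := ζ ^ (2 * (a : ℕ) + 1)) (γ := ζ ^ 2)
    (pow_ne_zero _ (hζ.ne_zero (by have := a.2; omega))) (fun i k h => Fin.ext ?_) hc0
    fun t ht => ?_
  · simp only [← pow_mul] at h
    have := hζ.pow_inj (by omega) (by omega) h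
    omega
  · rw [Fin.card_Icc] at ht
    have hmem : (⟨a + t, by omega⟩ : Fin n) ∈ Icc a b := by
      simp only [mem_Icc, Fin.le_def]; omega
    rw [← mem_zeroCode.1 hc _ hmem, oddPowers]
    refine sum_congr rfl fun i _ => ?_
    ring

theorem hasMinDist_zeroCode_Icc (hζ : IsPrimitiveRoot ζ (2 * n)) (a b : Fin n)
    (hS : #(Icc a b) < n) :
    HasMinDist (zeroCode (oddPowers ζ n) (Icc a b) : Set (Fin n → F)) (#(Icc a b) + 1) := by
  obtain ⟨c, hc, hc0, hwt⟩ := exists_mem_zeroCode_wt_le (oddPowers ζ n) hS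
  refine ⟨⟨c, hc, hc0, le_antisymm hwt (lt_wt_of_mem_zeroCode_Icc hζ hc hc0)⟩, ?_⟩
  rintro _ ⟨c', hc', hc'0, rfl⟩
  exact lt_wt_of_mem_zeroCode_Icc hζ hc' hc'0

end OddPowers

theorem exists_isPrimitiveRoot_of_dvd_card_sub_one {F : Type*} [Field F] [Fintype F] {k : ℕ}
    (hk : k ∣ Fintype.card F - 1) : ∃ ζ : F, IsPrimitiveRoot ζ k := by
  classical
  obtain ⟨g, hg⟩ := IsCyclic.exists_ofOrder_eq_natCard (α := Fˣ)
  rw [Nat.card_eq_fintype_card, Fintype.card_units] at hg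
  refine ⟨(g ^ (orderOf g / k) : Fˣ), ?_⟩
  rw [IsPrimitiveRoot.coe_units_iff, IsPrimitiveRoot.iff_orderOf]
  exact orderOf_pow_orderOf_div (by rw [hg]; have := Fintype.one_lt_card (α := F); omega)
    (hg ▸ hk)

theorem stmt_1_general (q : ℕ) (hqodd : Odd q)
    (F : Type) [Field F] [Fintype F] (hF : Fintype.card F = q)
    (n : ℕ) (hnodd : Odd n) (hn : 3 ≤ n) (hdvd : n ∣ (q - 1) / 2)
    (lam : ℕ) (hl2 : lam ≤ (n - 3) / 2) :
    ∃ C : Submodule F (Fin n → F),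
      IsNegacyclic C ∧ IsLCD C ∧
      Module.finrank F C = n - 2 * lam - 1 ∧
      HasMinDist (C : Set (Fin n → F)) (2 * (lam + 1)) := by
  have h2n : 2 * n ∣ Fintype.card F - 1 := by
    rw [hF, ← Nat.two_mul_div_two_of_even (Nat.Odd.sub_odd hqodd odd_one)]
    exact Nat.mul_dvd_mul_left 2 hdvd
  obtain ⟨ζ, hζ⟩ := exists_isPrimitiveRoot_of_dvd_card_sub_one h2n
  obtain ⟨r, rfl⟩ := hnodd
  obtain ⟨a, ha⟩ : ∃ a : Fin (2 * r + 1), (a : ℕ) = r - lam := ⟨⟨r - lam, by omega⟩, rfl⟩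
  obtain ⟨b, hb⟩ : ∃ b : Fin (2 * r + 1), (b : ℕ) = r + lam := ⟨⟨r + lam, by omega⟩, rfl⟩
  have hcard : #(Icc a b) = 2 * lam + 1 := by
    rw [Fin.card_Icc]
    omega
  refine ⟨zeroCode (oddPowers ζ _) (Icc a b), isNegacyclic_zeroCode (oddPowers_pow_eq_neg_one hζ) _,
    isLCD_zeroCode_Icc hζ (by omega), ?_, ?_⟩
  · rw [finrank_zeroCode (oddPowers_injective hζ), hcard]
    omega
  · rw [show 2 * (lam + 1) = #(Icc a b) + 1 by omega]
    exact hasMinDist_zeroCode_Icc hζ a b (by omega)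

theorem stmt_1 (q : ℕ) (hq : IsPrimePow q) (hqodd : Odd q)
    (F : Type) [Field F] [Fintype F] (hF : Fintype.card F = q)
    (n : ℕ) (hnodd : Odd n) (hn : 3 ≤ n) (hdvd : n ∣ (q - 1) / 2)
    (lam : ℕ) (hl2 : lam ≤ (n - 3) / 2) :
    ∃ C : Submodule F (Fin n → F),
      IsNegacyclic C ∧ IsLCD C ∧
      Module.finrank F C = n - 2 * lam - 1 ∧
      HasMinDist (C : Set (Fin n → F)) (2 * (lam + 1)) :=
  stmt_1_general q hqodd F hF n hnodd hn hdvd lam hl2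
end

section
/- Let q be an odd prime power such that 4 divides q + 1, and set n = q + 1. Then for every integer λ with 1 ≤ λ ≤ (q-3)/4 there exists a negacyclic LCD code over F_q of length q + 1 and dimension 4λ whose minimum distance is at least (q+3)/2 - 2λ. -/
open Finset

/-!
Put `n = q + 1 = 4m` and let `β` be a primitive `2n`-th root of unity over `F`, so that the roots
of `X ^ n + 1` are the `ω_t = β ^ (2t + 1)`, `t < n`. The code is generated by the polynomial `g`
whose roots are `Z = {±ω_t : λ ≤ t < 2m - λ}`. Every root of `X ^ n + 1` satisfies
`ω ^ q = -ω⁻¹`, and `Z` is stable under negation and inversion, so `Z` is stable under Frobenius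
and `g` has coefficients in `F`; its degree `4(m - λ)` gives dimension `4λ`. `Z` contains the
`2(m - λ)` terms of the geometric progression `β ^ (2λ + 1) * β ^ (2i)`, so the BCH bound gives
minimum distance at least `2(m - λ) + 1 = (q + 3)/2 - 2λ`.

For the LCD property write `x̂(ω)` for the value at `ω` of the polynomial with coefficient
vector `x`, and let `x` lie in the code and be orthogonal to it. Parseval's identity for
`x` against all negacyclic shifts of `g` shows that `x̂(ω) ĝ(ω⁻¹) = 0` for every root `ω`, so
`x̂` vanishes off `Z⁻¹ = Z`; it vanishes on `Z` since `g ∣ x`. Hence `x̂` vanishes at all `n`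
roots of `X ^ n + 1` and `x = 0`.
-/

open Polynomial

section Words

variable {F : Type*} [Field F] [DecidableEq F] {n : ℕ}

theorem aeval_ofFn {K : Type*} [Field K] [Algebra F K] (x : Fin n → F) (w : K) :
    aeval w (ofFn n x) = ∑ j : Fin n, algebraMap F K (x j) * w ^ (j : ℕ) := by
  simp [ofFn_eq_sum_monomial, aeval_monomial]

theorem coeff_ofFn (x : Fin n → F) (k : ℕ) :
    (ofFn n x).coeff k = if h : k < n then x ⟨k, h⟩ else 0 := by
  split_ifs with h
  · exact ofFn_coeff_eq_val_of_lt x h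
  · exact ofFn_coeff_eq_zero_of_ge x (not_lt.1 h)

theorem ofFn_negashift (hn : 0 < n) (c : Fin n → F) :
    ofFn n (negashift c) = X * ofFn n c - C (c ⟨n - 1, by omega⟩) * (X ^ n + 1) := by
  ext (_ | k)
  · simp [hn, negashift, hn.ne]
  · simp only [coeff_ofFn, coeff_sub, coeff_X_mul, coeff_C_mul, coeff_add, coeff_X_pow,
      coeff_one, negashift]
    rcases lt_trichotomy (k + 1) n with h | h | h
    · simp [h, show k < n by omega, show k + 1 ≠ n by omega]
    · subst h; simp
    · simp [show ¬ k + 1 < n by omega, show ¬ k < n by omega, h.ne']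

theorem aeval_ofFn_negashift {K : Type*} [Field K] [Algebra F K] {w : K} (hw : w ^ n = -1)
    (c : Fin n → F) : aeval w (ofFn n (negashift c)) = w * aeval w (ofFn n c) := by
  rcases Nat.eq_zero_or_pos n with rfl | hn
  · simp
  · simp [ofFn_negashift hn, hw]

theorem aeval_ofFn_negashift_iterate {K : Type*} [Field K] [Algebra F K] {w : K}
    (hw : w ^ n = -1) (c : Fin n → F) (k : ℕ) :
    aeval w (ofFn n (negashift^[k] c)) = w ^ k * aeval w (ofFn n c) := by
  induction k with
  | zero => simp
  | succ k ih => rw [Function.iterate_succ_apply', aeval_ofFn_negashift hw, ih, pow_succ']; ring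

end Words

section Code

variable {F : Type*} [Field F] [DecidableEq F] {n : ℕ} {g : F[X]}

variable (n) in
noncomputable def negacyclicCode (g : F[X]) : Submodule F (Fin n → F) :=
  ((Ideal.span {g}).restrictScalars F).comap (ofFn n)

theorem mem_negacyclicCode {c : Fin n → F} : c ∈ negacyclicCode n g ↔ g ∣ ofFn n c := by
  simp [negacyclicCode, Ideal.mem_span_singleton]

theorem isNegacyclic_negacyclicCode (hg : g ∣ X ^ n + 1) : IsNegacyclic (negacyclicCode n g) := by
  intro c hc
  rw [mem_negacyclicCode] at hc ⊢
  rcases Nat.eq_zero_or_pos n with rfl | hn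
  · simp
  · rw [ofFn_negashift hn]
    exact dvd_sub (dvd_mul_of_dvd_right hc _) (dvd_mul_of_dvd_right hg _)

theorem negacyclicCode_eq_ker (hg : g.Monic) :
    negacyclicCode n g = LinearMap.ker (modByMonicHom g ∘ₗ ofFn n) := by
  ext c
  simp [mem_negacyclicCode, modByMonic_eq_zero_iff_dvd hg]

theorem range_modByMonicHom_comp_ofFn (hg : g.Monic) (hdeg : g.natDegree ≤ n) :
    LinearMap.range (modByMonicHom g ∘ₗ ofFn n) = degreeLT F g.natDegree := by
  apply le_antisymm
  · rintro _ ⟨c, rfl⟩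
    rw [mem_degreeLT, ← degree_eq_natDegree hg.ne_zero]
    exact degree_modByMonic_lt _ hg
  · intro p hp
    rw [mem_degreeLT] at hp
    rcases eq_or_ne p 0 with rfl | hp0
    · exact zero_mem _
    have hpn : p.natDegree < n := ((natDegree_lt_iff_degree_lt hp0).2 hp).trans_le hdeg
    refine ⟨toFn n p, ?_⟩
    simp only [LinearMap.coe_comp, Function.comp_apply, modByMonicHom_apply,
      ofFn_comp_toFn_eq_id_of_natDegree_lt hpn]
    rwa [modByMonic_eq_self_iff hg, degree_eq_natDegree hg.ne_zero]

theorem finrank_negacyclicCode (hg : g.Monic) (hdeg : g.natDegree ≤ n) :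
    Module.finrank F (negacyclicCode n g) = n - g.natDegree := by
  have := LinearMap.finrank_range_add_finrank_ker (modByMonicHom g ∘ₗ ofFn n)
  rw [range_modByMonicHom_comp_ofFn hg hdeg, ← negacyclicCode_eq_ker hg,
    (degreeLTEquiv F _).finrank_eq, Module.finrank_fin_fun, Module.finrank_fin_fun] at this
  omega

end Code

section OddRoots

variable {K : Type*} [Field K] {n : ℕ} {β : K}

theorem IsPrimitiveRoot.pow_half_eq_neg_one (hβ : IsPrimitiveRoot β (2 * n)) (hn : 0 < n) :
    β ^ n = -1 :=
  (hβ.pow (by omega) (mul_comm 2 n)).eq_neg_one_of_two_right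

theorem IsPrimitiveRoot.odd_pow_pow_eq_neg_one (hβ : IsPrimitiveRoot β (2 * n)) (hn : 0 < n)
    (t : ℕ) : (β ^ (2 * t + 1)) ^ n = -1 := by
  rw [← pow_mul, mul_comm, pow_mul, hβ.pow_half_eq_neg_one hn, Odd.neg_one_pow ⟨t, rfl⟩]

theorem IsPrimitiveRoot.injective_odd_pow (hβ : IsPrimitiveRoot β (2 * n)) :
    Function.Injective fun t : Fin n => β ^ (2 * (t : ℕ) + 1) := by
  intro s t h
  have := hβ.pow_inj (by omega) (by omega) h
  ext; omega

theorem IsPrimitiveRoot.sum_odd_pow_pow_mul_inv_pow (hβ : IsPrimitiveRoot β (2 * n))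
    (j k : Fin n) :
    ∑ t : Fin n, (β ^ (2 * (t : ℕ) + 1)) ^ (j : ℕ) * (β ^ (2 * (t : ℕ) + 1))⁻¹ ^ (k : ℕ)
      = if j = k then (n : K) else 0 := by
  have hn : 0 < n := j.pos
  have hβ0 : β ≠ 0 := hβ.ne_zero (by omega)
  set d : ℤ := (j : ℤ) - k
  set ρ := (β ^ 2) ^ d
  have hterm (t : ℕ) : (β ^ (2 * t + 1)) ^ (j : ℕ) * (β ^ (2 * t + 1))⁻¹ ^ (k : ℕ)
      = β ^ d * ρ ^ t := by
    simp only [ρ, d, ← zpow_natCast, inv_zpow', ← zpow_mul, ← zpow_add₀ hβ0]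
    congr 1
    push_cast
    ring
  simp only [hterm]
  rw [← mul_sum, Fin.sum_univ_eq_sum_range (ρ ^ ·)]
  have hζ : IsPrimitiveRoot (β ^ 2) n := hβ.pow (by omega) rfl
  split_ifs with hjk
  · simp [d, ρ, hjk]
  · have hρ : ρ ≠ 1 := by
      rw [Ne, hζ.zpow_eq_one_iff_dvd]
      intro hdvd
      have := Int.eq_zero_of_abs_lt_dvd hdvd (by rw [abs_lt]; omega)
      exact hjk (Fin.ext (by omega))
    have hρn : ρ ^ n = 1 := by
      rw [← zpow_natCast, ← zpow_mul, mul_comm, zpow_mul, zpow_natCast, hζ.pow_eq_one, one_zpow]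
    have := mul_geom_sum ρ n
    rw [hρn, sub_self, mul_eq_zero, sub_eq_zero] at this
    rw [this.resolve_left hρ, mul_zero]

end OddRoots

section Spectrum

variable {F K : Type*} [Field F] [DecidableEq F] [Field K] [Algebra F K] {n : ℕ} {β : K}

theorem IsPrimitiveRoot.sum_aeval_mul_aeval_inv (hβ : IsPrimitiveRoot β (2 * n))
    (x y : Fin n → F) :
    ∑ t : Fin n, aeval (β ^ (2 * (t : ℕ) + 1)) (ofFn n x) *
        aeval (β ^ (2 * (t : ℕ) + 1))⁻¹ (ofFn n y)
      = n * algebraMap F K (∑ i, x i * y i) := by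
  calc _ = ∑ j : Fin n, ∑ k : Fin n, algebraMap F K (x j) * algebraMap F K (y k) *
        ∑ t : Fin n, (β ^ (2 * (t : ℕ) + 1)) ^ (j : ℕ) * (β ^ (2 * (t : ℕ) + 1))⁻¹ ^ (k : ℕ) := by
        simp only [aeval_ofFn, sum_mul_sum]
        simp only [mul_sum]
        rw [sum_comm]
        refine sum_congr rfl fun j _ => ?_
        rw [sum_comm]
        exact sum_congr rfl fun k _ => sum_congr rfl fun t _ => by ring
    _ = ∑ j : Fin n, ∑ k : Fin n, algebraMap F K (x j) * algebraMap F K (y k) *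
        if j = k then (n : K) else 0 := by
        simp only [hβ.sum_odd_pow_pow_mul_inv_pow]
    _ = _ := by simp [mul_sum, mul_comm]

theorem IsPrimitiveRoot.eq_zero_of_aeval_odd_pow (hβ : IsPrimitiveRoot β (2 * n))
    {x : Fin n → F} (hx : ∀ t : Fin n, aeval (β ^ (2 * (t : ℕ) + 1)) (ofFn n x) = 0) :
    x = 0 := by
  have := Matrix.eq_zero_of_forall_index_sum_mul_pow_eq_zero hβ.injective_odd_pow
    (v := fun j => algebraMap F K (x j)) (by simpa [aeval_ofFn] using hx)
  funext j
  simpa using congrFun this j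

theorem IsPrimitiveRoot.aeval_mul_aeval_inv_eq_zero (hβ : IsPrimitiveRoot β (2 * n))
    {C : Submodule F (Fin n → F)} (hC : IsNegacyclic C) {x y : Fin n → F}
    (hx : ∀ z ∈ C, ∑ i, x i * z i = 0) (hy : y ∈ C) (t : Fin n) :
    aeval (β ^ (2 * (t : ℕ) + 1)) (ofFn n x) * aeval (β ^ (2 * (t : ℕ) + 1))⁻¹ (ofFn n y)
      = 0 := by
  -- Parseval against the shifts `negashift^[k] y` is a Vandermonde system in the `ω_t⁻¹`.
  have hshift (k : ℕ) : negashift^[k] y ∈ C := by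
    induction k with
    | zero => exact hy
    | succ k ih => rw [Function.iterate_succ_apply']; exact hC _ ih
  have hinv (s : Fin n) : ((β ^ (2 * (s : ℕ) + 1))⁻¹) ^ n = -1 := by
    rw [inv_pow, hβ.odd_pow_pow_eq_neg_one t.pos, inv_neg, inv_one]
  refine congrFun (Matrix.eq_zero_of_forall_pow_sum_mul_pow_eq_zero
    (v := fun s : Fin n => aeval (β ^ (2 * (s : ℕ) + 1)) (ofFn n x) *
      aeval (β ^ (2 * (s : ℕ) + 1))⁻¹ (ofFn n y))
    (inv_injective.comp hβ.injective_odd_pow) fun k => ?_) t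
  have h := hβ.sum_aeval_mul_aeval_inv x (negashift^[k] y)
  rw [hx _ (hshift k), map_zero, mul_zero] at h
  simp only [aeval_ofFn_negashift_iterate (hinv _)] at h
  rw [← h]
  exact sum_congr rfl fun s _ => by simp only [Function.comp_apply]; ring

theorem IsPrimitiveRoot.isLCD_negacyclicCode (hβ : IsPrimitiveRoot β (2 * n)) {g : F[X]}
    (hg : g ∣ X ^ n + 1) (hdeg : g.natDegree < n)
    (hinv : ∀ t : Fin n, aeval (β ^ (2 * (t : ℕ) + 1))⁻¹ g = 0 →
      aeval (β ^ (2 * (t : ℕ) + 1)) g = 0) :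
    IsLCD (negacyclicCode n g) := by
  intro x hx horth
  refine hβ.eq_zero_of_aeval_odd_pow fun t => ?_
  obtain ⟨p, hp⟩ := mem_negacyclicCode.1 hx
  by_cases hgt : aeval (β ^ (2 * (t : ℕ) + 1)) g = 0
  · rw [hp, map_mul, hgt, zero_mul]
  · have hg_mem : toFn n g ∈ negacyclicCode n g := by
      rw [mem_negacyclicCode, ofFn_comp_toFn_eq_id_of_natDegree_lt hdeg]
    have := hβ.aeval_mul_aeval_inv_eq_zero (isNegacyclic_negacyclicCode hg) horth hg_mem t
    rw [ofFn_comp_toFn_eq_id_of_natDegree_lt hdeg] at this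
    exact (mul_eq_zero.1 this).resolve_right (mt (hinv t) hgt)

end Spectrum

-- The BCH bound: on the support of `x` the vanishing conditions form an invertible
-- Vandermonde system.
theorem lt_wt_of_aeval_mul_pow_eq_zero {F K : Type*} [Field F] [DecidableEq F] [Field K]
    [Algebra F K] {n δ : ℕ} {a ζ : K} (ha : a ≠ 0)
    (hζ : Function.Injective fun j : Fin n => ζ ^ (j : ℕ))
    {x : Fin n → F} (hx : x ≠ 0) (hroots : ∀ i < δ, aeval (a * ζ ^ i) (ofFn n x) = 0) :
    δ < wt x := by
  by_contra! hw
  set S := univ.filter fun j => x j ≠ 0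
  have hSδ : #S ≤ δ := by simpa [wt, S] using hw
  let e : Fin #S ≃ S := S.equivFin.symm
  have hv := Matrix.eq_zero_of_forall_pow_sum_mul_pow_eq_zero
    (f := fun k => ζ ^ ((e k : Fin n) : ℕ))
    (v := fun k => algebraMap F K (x (e k)) * a ^ ((e k : Fin n) : ℕ))
    (hζ.comp (Subtype.val_injective.comp e.injective)) fun i => ?_
  · obtain ⟨j, hj⟩ : ∃ j, x j ≠ 0 := by
      by_contra! h
      exact hx (funext h)
    have := congrFun hv (e.symm ⟨j, by simp [S, hj]⟩)
    simp [ha, hj] at this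
  · calc _ = ∑ j ∈ S, algebraMap F K (x j) * (a * ζ ^ (i : ℕ)) ^ (j : ℕ) := by
          rw [← sum_coe_sort S, ← e.sum_comp]
          exact sum_congr rfl fun k _ => by ring
      _ = aeval (a * ζ ^ (i : ℕ)) (ofFn n x) := by
          rw [aeval_ofFn, sum_filter_of_ne]
          intro j _ hj hx0
          simp [hx0] at hj
      _ = 0 := hroots i (i.2.trans_le hSδ)

section Descent

variable {F K : Type*} [Field F] [Fintype F] [Field K] [Algebra F K]

theorem FiniteField.mem_range_algebraMap_of_pow_card_eq {z : K}
    (hz : z ^ Fintype.card F = z) : z ∈ Set.range (algebraMap F K) := by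
  classical
  have hsplit : ∏ a : F, (X - C a) = (X ^ Fintype.card F - X : F[X]) := by
    have hmonic : (X ^ Fintype.card F - X : F[X]).Monic :=
      monic_X_pow_sub (by rw [degree_X]; exact_mod_cast Fintype.one_lt_card)
    have := prod_multiset_X_sub_C_of_monic_of_roots_card_eq hmonic (by
      rw [roots_X_pow_card_sub_X, FiniteField.X_pow_card_sub_X_natDegree_eq F Fintype.one_lt_card]
      rfl)
    rwa [roots_X_pow_card_sub_X] at this
  have := congrArg (aeval z) hsplit
  rw [map_prod, map_sub, map_pow, aeval_X, hz, sub_self, prod_eq_zero_iff] at this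
  obtain ⟨a, -, ha⟩ := this
  rw [map_sub, aeval_X, aeval_C, sub_eq_zero] at ha
  exact ⟨a, ha.symm⟩

theorem FiniteField.exists_map_eq_of_coeff_pow_card {P : K[X]}
    (h : ∀ k, P.coeff k ^ Fintype.card F = P.coeff k) :
    ∃ g : F[X], g.map (algebraMap F K) = P :=
  (mem_lifts P).1 ((lifts_iff_coeff_lifts P).2 fun k => mem_range_algebraMap_of_pow_card_eq (h k))

theorem FiniteField.exists_map_eq_prod_X_sub_C {Z : Finset K}
    (hZ : ∀ z ∈ Z, z ^ Fintype.card F ∈ Z) :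
    ∃ g : F[X], g.map (algebraMap F K) = ∏ z ∈ Z, (X - C z) := by
  classical
  let φ : K →+* K := frobeniusAlgHom F K
  have hφ (z : K) : φ z = z ^ Fintype.card F := rfl
  have hZφ : Z.image φ = Z :=
    eq_of_subset_of_card_le (image_subset_iff.2 hZ) (card_image_of_injective _ φ.injective).ge
  have hfix : (∏ z ∈ Z, (X - C z)).map φ = ∏ z ∈ Z, (X - C z) := by
    simp only [Polynomial.map_prod, Polynomial.map_sub, map_X, map_C]
    conv_rhs => rw [← hZφ]
    rw [prod_image φ.injective.injOn]
  refine exists_map_eq_of_coeff_pow_card fun k => ?_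
  simpa [hφ] using congrArg (coeff · k) hfix

end Descent

section ZeroSet

variable {F K : Type*} [Field F] [Field K] [Algebra F K] {n : ℕ} {g : F[X]} {Z : Finset K}

theorem prod_X_sub_C_dvd_of_eval_eq_zero {p : K[X]} (hp : p ≠ 0)
    (h : ∀ z ∈ Z, p.eval z = 0) : ∏ z ∈ Z, (X - C z) ∣ p :=
  (Multiset.prod_X_sub_C_dvd_iff_le_roots hp Z.val).2
    ((Multiset.le_iff_subset Z.nodup).2 fun z hz => (mem_roots hp).2 (h z hz))

theorem aeval_eq_zero_iff_mem_of_map_eq_prod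
    (hg : g.map (algebraMap F K) = ∏ z ∈ Z, (X - C z)) {w : K} : aeval w g = 0 ↔ w ∈ Z := by
  rw [aeval_def, ← eval_map, hg, eval_prod, prod_eq_zero_iff]
  simp [sub_eq_zero]

theorem monic_of_map_eq_prod (hg : g.map (algebraMap F K) = ∏ z ∈ Z, (X - C z)) : g.Monic :=
  (Function.Injective.monic_map_iff (algebraMap F K).injective).2
    (hg ▸ monic_prod_of_monic _ _ fun z _ => monic_X_sub_C z)

theorem natDegree_eq_card_of_map_eq_prod (hg : g.map (algebraMap F K) = ∏ z ∈ Z, (X - C z)) :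
    g.natDegree = #Z := by
  rw [← natDegree_map (algebraMap F K), hg, natDegree_finsetProd_X_sub_C_eq_card]

theorem dvd_X_pow_add_one_of_map_eq_prod (hg : g.map (algebraMap F K) = ∏ z ∈ Z, (X - C z))
    (hn : 0 < n) (hZ : ∀ z ∈ Z, z ^ n = -1) : g ∣ X ^ n + 1 := by
  have hne : (X ^ n + 1 : K[X]) ≠ 0 := by simpa using X_pow_add_C_ne_zero hn (1 : K)
  rw [← map_dvd_map' (algebraMap F K), hg, Polynomial.map_add, Polynomial.map_pow, map_X,
    Polynomial.map_one]
  exact prod_X_sub_C_dvd_of_eval_eq_zero hne fun z hz => by simp [hZ z hz]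

variable [DecidableEq F]

theorem aeval_eq_zero_of_mem_negacyclicCode
    (hg : g.map (algebraMap F K) = ∏ z ∈ Z, (X - C z)) {c : Fin n → F}
    (hc : c ∈ negacyclicCode n g) {z : K} (hz : z ∈ Z) : aeval z (ofFn n c) = 0 := by
  obtain ⟨p, hp⟩ := mem_negacyclicCode.1 hc
  rw [hp, map_mul, (aeval_eq_zero_iff_mem_of_map_eq_prod hg).2 hz, zero_mul]

theorem IsPrimitiveRoot.isLCD_negacyclicCode_of_inv_mem {β : K} (hβ : IsPrimitiveRoot β (2 * n))
    (hg : g.map (algebraMap F K) = ∏ z ∈ Z, (X - C z)) (hZ : ∀ z ∈ Z, z ^ n = -1)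
    (hinv : ∀ z ∈ Z, z⁻¹ ∈ Z) (hcard : #Z < n) : IsLCD (negacyclicCode n g) := by
  refine hβ.isLCD_negacyclicCode (dvd_X_pow_add_one_of_map_eq_prod hg (by omega) hZ)
    (natDegree_eq_card_of_map_eq_prod hg ▸ hcard) fun t ht => ?_
  rw [aeval_eq_zero_iff_mem_of_map_eq_prod hg] at ht ⊢
  simpa using hinv _ ht

end ZeroSet

section DefiningSet

open scoped Pointwise

variable {K : Type*} [Field K] [DecidableEq K] {m l : ℕ} {β : K}

noncomputable def halfDefiningSet (β : K) (m l : ℕ) : Finset K :=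
  (Ico l (2 * m - l)).image fun t => β ^ (2 * t + 1)

noncomputable def definingSet (β : K) (m l : ℕ) : Finset K :=
  halfDefiningSet β m l ∪ -halfDefiningSet β m l

theorem mem_definingSet {z : K} :
    z ∈ definingSet β m l ↔ z ∈ halfDefiningSet β m l ∨ -z ∈ halfDefiningSet β m l := by
  rw [definingSet, mem_union, mem_neg']

theorem inv_mem_halfDefiningSet (hβ : IsPrimitiveRoot β (2 * (4 * m))) {z : K}
    (hz : z ∈ halfDefiningSet β m l) : -z⁻¹ ∈ halfDefiningSet β m l := by
  obtain ⟨t, ht, rfl⟩ := mem_image.1 hz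
  rw [mem_Ico] at ht
  refine mem_image.2 ⟨2 * m - 1 - t, mem_Ico.2 (by omega), ?_⟩
  have hβ0 : β ≠ 0 := hβ.ne_zero (by omega)
  rw [eq_neg_iff_add_eq_zero, ← mul_right_inj' (pow_ne_zero (2 * t + 1) hβ0), mul_add,
    mul_inv_cancel₀ (pow_ne_zero _ hβ0), ← pow_add, show 2 * t + 1 + (2 * (2 * m - 1 - t) + 1)
    = 4 * m by omega, hβ.pow_half_eq_neg_one (by omega)]
  ring

theorem inv_mem_definingSet (hβ : IsPrimitiveRoot β (2 * (4 * m))) {z : K}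
    (hz : z ∈ definingSet β m l) : z⁻¹ ∈ definingSet β m l := by
  rw [mem_definingSet] at hz ⊢
  rcases hz with hz | hz
  · exact Or.inr (inv_mem_halfDefiningSet hβ hz)
  · exact Or.inl (by simpa using inv_mem_halfDefiningSet hβ hz)

theorem pow_eq_neg_one_of_mem_definingSet (hβ : IsPrimitiveRoot β (2 * (4 * m))) {z : K}
    (hz : z ∈ definingSet β m l) : z ^ (4 * m) = -1 := by
  suffices ∀ w ∈ halfDefiningSet β m l, w ^ (4 * m) = -1 by
    have he : Even (4 * m) := ⟨2 * m, by ring⟩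
    rcases mem_definingSet.1 hz with hz | hz
    · exact this z hz
    · simpa [he.neg_pow] using this _ hz
  intro w hw
  obtain ⟨t, ht, rfl⟩ := mem_image.1 hw
  exact hβ.odd_pow_pow_eq_neg_one (by rw [mem_Ico] at ht; omega) t

theorem pow_mem_definingSet (hβ : IsPrimitiveRoot β (2 * (4 * m))) {q : ℕ}
    (hq : q + 1 = 4 * m) {z : K} (hz : z ∈ definingSet β m l) : z ^ q ∈ definingSet β m l := by
  have hz0 : z ≠ 0 := by
    rintro rfl
    simpa [show 4 * m ≠ 0 by omega] using pow_eq_neg_one_of_mem_definingSet hβ hz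
  have : z ^ q = -z⁻¹ := by
    rw [eq_neg_iff_add_eq_zero, ← mul_right_inj' hz0, mul_add, mul_inv_cancel₀ hz0, ← pow_succ',
      hq, pow_eq_neg_one_of_mem_definingSet hβ hz]
    ring
  rw [this, mem_definingSet, neg_neg]
  rcases mem_definingSet.1 (inv_mem_definingSet hβ hz) with h | h
  · exact Or.inr h
  · exact Or.inl h

theorem card_definingSet (hβ : IsPrimitiveRoot β (2 * (4 * m))) (hl : l ≤ m) :
    #(definingSet β m l) = 4 * (m - l) := by
  have hcard : #(halfDefiningSet β m l) = 2 * (m - l) := by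
    rw [halfDefiningSet, card_image_of_injOn, Nat.card_Ico]
    · omega
    · intro s hs t ht h
      simp only [coe_Ico, Set.mem_Ico] at hs ht
      have := hβ.pow_inj (by omega) (by omega) h
      omega
  have hdisj : Disjoint (halfDefiningSet β m l) (-halfDefiningSet β m l) := by
    rw [disjoint_left]
    intro z hz hz'
    rw [mem_neg'] at hz'
    obtain ⟨s, hs, rfl⟩ := mem_image.1 hz
    obtain ⟨t, ht, h⟩ := mem_image.1 hz'
    rw [mem_Ico] at hs ht
    rw [← neg_one_mul, ← hβ.pow_half_eq_neg_one (by omega), ← pow_add] at h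
    have := hβ.pow_inj (by omega) (by omega) h
    omega
  rw [definingSet, card_union_of_disjoint hdisj, card_neg, hcard]
  ring

theorem mem_definingSet_of_lt {i : ℕ} (hi : i < 2 * (m - l)) :
    β ^ (2 * l + 1) * (β ^ 2) ^ i ∈ definingSet β m l := by
  refine mem_union_left _ (mem_image.2 ⟨l + i, mem_Ico.2 ⟨by omega, by omega⟩, ?_⟩)
  rw [← pow_mul, ← pow_add]
  ring_nf

end DefiningSet

theorem FiniteField.exists_primitiveRoot_two_mul_card_add_one (F : Type*) [Field F] [Fintype F]
    (hodd : Odd (Fintype.card F)) :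
    ∃ β : AlgebraicClosure F, IsPrimitiveRoot β (2 * (Fintype.card F + 1)) := by
  have : NeZero ((2 * (Fintype.card F + 1) : ℕ) : F) := ⟨by
    push_cast
    rw [FiniteField.cast_card_eq_zero, zero_add, mul_one]
    exact Ring.two_ne_zero fun h => by
      rw [FiniteField.even_card_iff_char_two, ← Nat.even_iff] at h
      exact Nat.not_even_iff_odd.2 hodd h⟩
  exact HasEnoughRootsOfUnity.exists_primitiveRoot _ _

theorem stmt_4_general (q : ℕ) (h4 : 4 ∣ q + 1)
    (F : Type) [Field F] [Fintype F] (hF : Fintype.card F = q)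
    (lam : ℕ) (hl1 : 1 ≤ lam) (hl2 : lam ≤ (q - 3) / 4) :
    ∃ C : Submodule F (Fin (q + 1) → F),
      IsNegacyclic C ∧ IsLCD C ∧
      Module.finrank F C = 4 * lam ∧
      ∀ c ∈ C, c ≠ 0 → (q + 3) / 2 - 2 * lam ≤ wt c := by
  classical
  obtain ⟨m, hm⟩ := h4
  obtain ⟨β, hβ⟩ := FiniteField.exists_primitiveRoot_two_mul_card_add_one F
    (hF ▸ Nat.odd_iff.2 (by omega))
  rw [hF] at hβ
  have hβm : IsPrimitiveRoot β (2 * (4 * m)) := hm ▸ hβ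
  set Z := definingSet β m lam
  obtain ⟨g, hg⟩ := FiniteField.exists_map_eq_prod_X_sub_C (Z := Z) fun z hz =>
    hF ▸ pow_mem_definingSet hβm hm hz
  have hZ : ∀ z ∈ Z, z ^ (q + 1) = -1 := fun z hz =>
    hm ▸ pow_eq_neg_one_of_mem_definingSet hβm hz
  have hcard : #Z = 4 * (m - lam) := card_definingSet hβm (by omega)
  refine ⟨negacyclicCode (q + 1) g,
    isNegacyclic_negacyclicCode (dvd_X_pow_add_one_of_map_eq_prod hg (by omega) hZ),
    hβ.isLCD_negacyclicCode_of_inv_mem hg hZ (fun z => inv_mem_definingSet hβm) (by omega),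
    ?_, fun c hc hc0 => ?_⟩
  · rw [finrank_negacyclicCode (monic_of_map_eq_prod hg)
      (by rw [natDegree_eq_card_of_map_eq_prod hg]; omega),
      natDegree_eq_card_of_map_eq_prod hg, hcard]
    omega
  · have hζ : Function.Injective fun j : Fin (q + 1) => (β ^ 2) ^ (j : ℕ) :=
      fun i j h => Fin.ext ((hβ.pow (by omega) rfl).pow_inj i.2 j.2 h)
    have := lt_wt_of_aeval_mul_pow_eq_zero (pow_ne_zero _ (hβ.ne_zero (by omega))) hζ hc0
      fun i hi => aeval_eq_zero_of_mem_negacyclicCode hg hc (mem_definingSet_of_lt hi)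
    omega

theorem stmt_4 (q : ℕ) (hq : IsPrimePow q) (hqodd : Odd q) (h4 : 4 ∣ q + 1)
    (F : Type) [Field F] [Fintype F] (hF : Fintype.card F = q)
    (lam : ℕ) (hl1 : 1 ≤ lam) (hl2 : lam ≤ (q - 3) / 4) :
    ∃ C : Submodule F (Fin (q + 1) → F),
      IsNegacyclic C ∧ IsLCD C ∧
      Module.finrank F C = 4 * lam ∧
      ∀ c ∈ C, c ≠ 0 → (q + 3) / 2 - 2 * lam ≤ wt c :=
  stmt_4_general q h4 F hF lam hl1 hl2
end

section
/- Let q be an odd prime power and let n divide (q+1)/2 with n ≥ 3. Working with q-cyclotomic cosets modulo 2n: (1) if n is even, then for all 0 ≤ j ≤ n/2 - 1 the coset C_{1+2j} equals the two-element set {1+2j, 1+2(n-1-j)}; (2) if n is odd, then C_{1+2j} = {1+2j, 1+2(n-1-j)} for all 0 ≤ j ≤ (n-3)/2, while C_{1+2j} = {1+2j} is a singleton for j = (n-1)/2. -/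
/-- The `b`-cyclotomic coset of `s` modulo `N`: `{s * b^j mod N : j ≥ 0}`. -/
def cycCoset (b N : ℕ) (s : ZMod N) : Set (ZMod N) :=
  {x | ∃ j : ℕ, x = s * (b : ZMod N) ^ j}

lemma cycCoset_pair (b N : ℕ) (s : ZMod N) (hb : (b : ZMod N) = -1) :
    cycCoset b N s = {s, -s} := by
  ext x
  simp only [cycCoset, Set.mem_setOf_eq, Set.mem_insert_iff, Set.mem_singleton_iff]
  constructor
  · rintro ⟨j, rfl⟩
    rw [hb]
    rcases Nat.even_or_odd j with h | h
    · left; rw [h.neg_one_pow, mul_one]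
    · right; rw [h.neg_one_pow, mul_neg_one]
  · rintro (rfl | rfl)
    · exact ⟨0, by simp⟩
    · exact ⟨1, by simp [hb]⟩

theorem stmt_6 (q : ℕ) (hq : IsPrimePow q) (hqodd : Odd q)
    (n : ℕ) (hn : 3 ≤ n) (hdvd : n ∣ (q + 1) / 2) :
    (Even n → ∀ j : ℕ, j ≤ n / 2 - 1 →
      cycCoset q (2 * n) ((1 + 2 * j : ℕ) : ZMod (2 * n)) =
        {((1 + 2 * j : ℕ) : ZMod (2 * n)), ((1 + 2 * (n - 1 - j) : ℕ) : ZMod (2 * n))}) ∧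
    (Odd n →
      (∀ j : ℕ, j ≤ (n - 3) / 2 →
        cycCoset q (2 * n) ((1 + 2 * j : ℕ) : ZMod (2 * n)) =
          {((1 + 2 * j : ℕ) : ZMod (2 * n)), ((1 + 2 * (n - 1 - j) : ℕ) : ZMod (2 * n))}) ∧
      cycCoset q (2 * n) ((1 + 2 * ((n - 1) / 2) : ℕ) : ZMod (2 * n)) =
        {((1 + 2 * ((n - 1) / 2) : ℕ) : ZMod (2 * n))}) := by
  -- 2n ∣ q + 1
  have h2 : 2 ∣ q + 1 := by
    obtain ⟨k, hk⟩ := hqodd; omega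
  have h2n : 2 * n ∣ q + 1 := by
    obtain ⟨m, hm⟩ := hdvd
    obtain ⟨t, ht⟩ := h2
    refine ⟨m, ?_⟩
    calc q + 1 = 2 * t := ht
      _ = 2 * (n * m) := by rw [← hm]; omega
      _ = 2 * n * m := by ring
  have hb : (q : ZMod (2 * n)) = -1 := by
    have h0 : ((q + 1 : ℕ) : ZMod (2 * n)) = 0 :=
      (ZMod.natCast_eq_zero_iff _ _).mpr h2n
    push_cast at h0
    linear_combination h0
  -- key negation fact
  have key : ∀ j : ℕ, j ≤ n - 1 →
      -((1 + 2 * j : ℕ) : ZMod (2 * n)) = ((1 + 2 * (n - 1 - j) : ℕ) : ZMod (2 * n)) := by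
    intro j hj
    have hsum : (1 + 2 * j) + (1 + 2 * (n - 1 - j)) = 2 * n := by omega
    have h0 : ((1 + 2 * j : ℕ) : ZMod (2 * n)) + ((1 + 2 * (n - 1 - j) : ℕ) : ZMod (2 * n)) = 0 := by
      rw [← Nat.cast_add, hsum, ZMod.natCast_self]
    linear_combination -h0
  refine ⟨?_, fun hodd => ⟨?_, ?_⟩⟩
  · intro hne j hj
    rw [cycCoset_pair q (2 * n) _ hb, key j (by omega)]
  · intro j hj
    rw [cycCoset_pair q (2 * n) _ hb, key j (by omega)]
  · rw [cycCoset_pair q (2 * n) _ hb]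
    obtain ⟨k, hk⟩ := hodd
    have hval : 1 + 2 * ((n - 1) / 2) = n := by omega
    rw [hval]
    have hneg : -((n : ℕ) : ZMod (2 * n)) = ((n : ℕ) : ZMod (2 * n)) := by
      have h0 : ((n : ℕ) : ZMod (2 * n)) + ((n : ℕ) : ZMod (2 * n)) = 0 := by
        rw [← Nat.cast_add]
        have : n + n = 2 * n := by ring
        rw [this, ZMod.natCast_self]
      linear_combination -h0
    rw [hneg, Set.pair_eq_singleton]
end

section
/- Let q be an odd prime power such that 4 divides q + 1, and set n = q + 1. Working with q-cyclotomic cosets modulo 2n = 2(q+1): (1) for all 0 ≤ j ≤ (q-3)/4, C_{1+2j} = {1+2j, 1+2((q-1)/2 - j)}; (2) for all (q+1)/2 ≤ j ≤ (3q-1)/4, C_{1+2j} = {1+2j, 1+2(n + (q-1)/2 - j)}. -/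
theorem stmt_7 (q : ℕ) (hq : IsPrimePow q) (hqodd : Odd q) (h4 : 4 ∣ q + 1) :
    (∀ j : ℕ, j ≤ (q - 3) / 4 →
      cycCoset q (2 * (q + 1)) ((1 + 2 * j : ℕ) : ZMod (2 * (q + 1))) =
        {((1 + 2 * j : ℕ) : ZMod (2 * (q + 1))),
         ((1 + 2 * ((q - 1) / 2 - j) : ℕ) : ZMod (2 * (q + 1)))}) ∧
    (∀ j : ℕ, (q + 1) / 2 ≤ j → j ≤ (3 * q - 1) / 4 →
      cycCoset q (2 * (q + 1)) ((1 + 2 * j : ℕ) : ZMod (2 * (q + 1))) =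
        {((1 + 2 * j : ℕ) : ZMod (2 * (q + 1))),
         ((1 + 2 * ((q + 1) + (q - 1) / 2 - j) : ℕ) : ZMod (2 * (q + 1)))}) := by
  obtain ⟨k, hk⟩ := hqodd
  have h0 : ((2 * (q + 1) : ℕ) : ZMod (2 * (q + 1))) = 0 := ZMod.natCast_self _
  -- q^2 = 1 in ZMod (2*(q+1))
  have hq2 : ((q : ZMod (2 * (q + 1))))^2 = 1 := by
    have hnat : q ^ 2 = 1 + 2 * (q + 1) * k := by subst hk; ring
    calc ((q : ZMod (2 * (q + 1))))^2 = ((q ^ 2 : ℕ) : ZMod (2 * (q + 1))) := by push_cast; ring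
      _ = ((1 + 2 * (q + 1) * k : ℕ) : ZMod (2 * (q + 1))) := by rw [hnat]
      _ = 1 := by rw [Nat.cast_add, Nat.cast_mul, h0, zero_mul, add_zero, Nat.cast_one]
  -- every coset is {s, s*q}
  have coset_eq : ∀ s : ZMod (2 * (q + 1)),
      cycCoset q (2 * (q + 1)) s = {s, s * (q : ZMod (2 * (q + 1)))} := by
    intro s
    ext x
    simp only [cycCoset, Set.mem_setOf_eq, Set.mem_insert_iff, Set.mem_singleton_iff]
    constructor
    · rintro ⟨j, rfl⟩
      rcases Nat.even_or_odd j with ⟨m, rfl⟩ | ⟨m, rfl⟩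
      · left
        rw [show m + m = 2 * m by ring, pow_mul, hq2, one_pow, mul_one]
      · right
        rw [pow_succ, pow_mul, hq2, one_pow, one_mul]
    · rintro (rfl | rfl)
      exacts [⟨0, by simp⟩, ⟨1, by simp⟩]
  -- casting helper
  have cast_mul : ∀ a b c : ℕ, a * q = b + 2 * (q + 1) * c →
      ((a : ZMod (2 * (q + 1))) * (q : ZMod (2 * (q + 1))) = (b : ZMod (2 * (q + 1)))) := by
    intro a b c h
    rw [← Nat.cast_mul, h, Nat.cast_add, Nat.cast_mul, h0, zero_mul, add_zero]
  constructor
  · intro j hj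
    rw [coset_eq]
    have hjk : j ≤ k := by omega
    obtain ⟨m, hm⟩ := Nat.le.dest hjk
    have harith : (1 + 2 * j) * q = (1 + 2 * ((q - 1) / 2 - j)) + 2 * (q + 1) * j := by
      have h1 : (q - 1) / 2 - j = m := by omega
      rw [h1]
      subst hm
      subst hk
      ring
    rw [cast_mul _ _ _ harith]
  · intro j hj1 hj2
    rw [coset_eq]
    have ht1 : 1 ≤ j := by omega
    obtain ⟨t, rfl⟩ := Nat.exists_eq_add_of_le ht1
    have harith : (1 + 2 * (1 + t)) * q
        = (1 + 2 * ((q + 1) + (q - 1) / 2 - (1 + t))) + 2 * (q + 1) * t := by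
      have htle : t ≤ 3 * k + 1 := by omega
      obtain ⟨m, hm⟩ := Nat.le.dest htle
      have h1 : (q + 1) + (q - 1) / 2 - (1 + t) = m := by omega
      rw [h1]
      subst hk
      have hz : (t : ℤ) + m = 3 * k + 1 := by exact_mod_cast hm
      zify
      linear_combination (-2 : ℤ) * hz
    rw [cast_mul _ _ _ harith]
end

section
/- Let q be an odd prime power such that 4 divides q + 1, and set n = q + 1. Then, for q-cyclotomic cosets modulo 2n = 2(q+1), for all 0 ≤ j ≤ (q-3)/4 one has -C_{1+2j} = C_{1+2((q+1)/2 + j)}. -/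
theorem stmt_8 (q : ℕ) (hq : IsPrimePow q) (hqodd : Odd q) (h4 : 4 ∣ q + 1)
    (j : ℕ) (hj : j ≤ (q - 3) / 4) :
    (fun x => -x) '' cycCoset q (2 * (q + 1)) ((1 + 2 * j : ℕ) : ZMod (2 * (q + 1))) =
      cycCoset q (2 * (q + 1)) ((1 + 2 * ((q + 1) / 2 + j) : ℕ) : ZMod (2 * (q + 1))) := by
  obtain ⟨k, hk⟩ := hqodd
  subst hk
  set N : ℕ := 2 * (2 * k + 1 + 1) with hN
  set s : ZMod N := ((1 + 2 * j : ℕ) : ZMod N) with hs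
  set s' : ZMod N := ((1 + 2 * ((2 * k + 1 + 1) / 2 + j) : ℕ) : ZMod N) with hs'
  have hq2 : ((2 * k + 1 : ℕ) : ZMod N) ^ 2 = 1 := by
    have hnat : (2 * k + 1) ^ 2 = N * k + 1 := by rw [hN]; ring
    rw [← Nat.cast_pow, hnat]
    push_cast [ZMod.natCast_self]
    ring
  have hneg : s' * ((2 * k + 1 : ℕ) : ZMod N) = -s := by
    have hd : (2 * k + 1 + 1) / 2 = k + 1 := by omega
    have hnat : (1 + 2 * ((2 * k + 1 + 1) / 2 + j)) * (2 * k + 1) + (1 + 2 * j)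
        = N * (k + 1 + j) := by rw [hd, hN]; ring
    have := congrArg (fun m : ℕ => (m : ZMod N)) hnat
    push_cast at this
    rw [ZMod.natCast_self, zero_mul] at this
    rw [hs', hs]
    push_cast
    linear_combination this
  ext x
  simp only [Set.mem_image, cycCoset, Set.mem_setOf_eq]
  constructor
  · rintro ⟨y, ⟨m, rfl⟩, rfl⟩
    refine ⟨m + 1, ?_⟩
    have : s' * ((2 * k + 1 : ℕ) : ZMod N) ^ (m + 1)
        = (s' * ((2 * k + 1 : ℕ) : ZMod N)) * ((2 * k + 1 : ℕ) : ZMod N) ^ m := by ring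
    rw [this, hneg]; ring
  · rintro ⟨m, rfl⟩
    refine ⟨s * ((2 * k + 1 : ℕ) : ZMod N) ^ (m + 1), ⟨m + 1, rfl⟩, ?_⟩
    have : -(s * ((2 * k + 1 : ℕ) : ZMod N) ^ (m + 1))
        = (s' * ((2 * k + 1 : ℕ) : ZMod N) ^ m) * (((2 * k + 1 : ℕ) : ZMod N) ^ 2) := by
      linear_combination (-((2 * k + 1 : ℕ) : ZMod N) ^ (m + 1)) * hneg
    rw [this, hq2, mul_one]
end

section
/- Let q be an odd prime power, let γ be a positive divisor of q - 1 and set n = (q-1)/γ (so each q²-cyclotomic coset modulo 2n is a singleton). (1) If γ is odd, then for all 0 ≤ j ≤ n/2 - 1 one has -q·C_{1+2j} = C_{1+2(n/2 - 1 - j)}, and for all j with n/2 < j ≤ n - 1 one has -q·C_{1+2j} = C_{1+2(3n/2 - 1 - j)}. (2) If γ is even, then for all 0 ≤ j ≤ n - 1 one has -q·C_{1+2j} = C_{1+2(n-1-j)}. -/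
private lemma key_eq (N a b c : ℕ) (h : a + b = N * c) :
    (a : ZMod N) = -(b : ZMod N) := by
  have h0 : ((a + b : ℕ) : ZMod N) = 0 := by
    rw [h, Nat.cast_mul, ZMod.natCast_self, zero_mul]
  push_cast at h0
  exact eq_neg_of_add_eq_zero_left h0

theorem stmt_9 (q : ℕ) (hq : IsPrimePow q) (hqodd : Odd q)
    (γ : ℕ) (hγ : 0 < γ) (hdvd : γ ∣ q - 1) (n : ℕ) (hn : n = (q - 1) / γ) :
    (Odd γ →
      (∀ j : ℕ, j ≤ n / 2 - 1 →
        (fun x => -(q : ZMod (2 * n)) * x) ''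
            cycCoset (q ^ 2) (2 * n) ((1 + 2 * j : ℕ) : ZMod (2 * n)) =
          cycCoset (q ^ 2) (2 * n) ((1 + 2 * (n / 2 - 1 - j) : ℕ) : ZMod (2 * n))) ∧
      (∀ j : ℕ, n / 2 < j → j ≤ n - 1 →
        (fun x => -(q : ZMod (2 * n)) * x) ''
            cycCoset (q ^ 2) (2 * n) ((1 + 2 * j : ℕ) : ZMod (2 * n)) =
          cycCoset (q ^ 2) (2 * n) ((1 + 2 * (3 * n / 2 - 1 - j) : ℕ) : ZMod (2 * n)))) ∧
    (Even γ → ∀ j : ℕ, j ≤ n - 1 →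
      (fun x => -(q : ZMod (2 * n)) * x) ''
          cycCoset (q ^ 2) (2 * n) ((1 + 2 * j : ℕ) : ZMod (2 * n)) =
        cycCoset (q ^ 2) (2 * n) ((1 + 2 * (n - 1 - j) : ℕ) : ZMod (2 * n))) := by
  have hq3 : 3 ≤ q := by
    have h1 : 1 < q := hq.one_lt
    have h2 : q % 2 = 1 := Nat.odd_iff.mp hqodd
    omega
  have hq1 : q = γ * n + 1 := by
    have h1 : γ * n = q - 1 := by rw [hn, Nat.mul_div_cancel' hdvd]
    omega
  have hevA : Even (γ * n) := by
    have h2 : q % 2 = 1 := Nat.odd_iff.mp hqodd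
    rw [Nat.even_iff]
    set A := γ * n with hA
    omega
  have hn0 : 0 < n := by
    rcases Nat.eq_zero_or_pos n with h | h
    · exfalso; rw [h, mul_zero] at hq1; omega
    · exact h
  -- q^2 ≡ 1 mod 2n
  obtain ⟨t, ht⟩ : ∃ t, γ * n = 2 * t := by
    obtain ⟨t, ht⟩ := hevA; exact ⟨t, by omega⟩
  have hqt : q = 2 * t + 1 := by rw [hq1, ht]
  have hsq : q ^ 2 = 2 * n * (γ * (t + 1)) + 1 := by
    calc q ^ 2 = (2 * t + 1) ^ 2 := by rw [hqt]
      _ = 2 * (2 * t) * (t + 1) + 1 := by ring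
      _ = 2 * (γ * n) * (t + 1) + 1 := by rw [ht]
      _ = 2 * n * (γ * (t + 1)) + 1 := by ring
  have hq2 : ((q ^ 2 : ℕ) : ZMod (2 * n)) = 1 := by
    rw [hsq]
    have h3 : (2 * n * (γ * (t + 1)) : ℕ) = (2 * n) * (γ * (t + 1)) := by ring
    rw [Nat.cast_add, h3, Nat.cast_mul, ZMod.natCast_self, zero_mul, Nat.cast_one,
      zero_add]
  have hcos : ∀ s : ZMod (2 * n), cycCoset (q ^ 2) (2 * n) s = {s} := by
    intro s
    ext x
    simp [cycCoset, hq2]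
  constructor
  · intro hoγ
    have hnev : n % 2 = 0 := by
      rcases Nat.even_mul.mp hevA with h | h
      · exact absurd h (Nat.not_even_iff_odd.mpr hoγ)
      · exact Nat.even_iff.mp h
    obtain ⟨m, hm⟩ : ∃ m, γ = 2 * m + 1 := by
      obtain ⟨m, hm⟩ := hoγ; exact ⟨m, hm⟩
    have h2 : q = 2 * n * m + (n + 1) := by rw [hq1, hm]; ring
    have hzero : ((2 * n * m : ℕ) : ZMod (2 * n)) = 0 := by
      rw [Nat.cast_mul, ZMod.natCast_self, zero_mul]
    have hqv : (q : ZMod (2 * n)) = ((n + 1 : ℕ) : ZMod (2 * n)) := by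
      rw [h2, Nat.cast_add, hzero, zero_add]
    constructor
    · intro j hj
      rw [hcos, hcos, Set.image_singleton, Set.singleton_eq_singleton_iff]
      have h1 : -(q : ZMod (2 * n)) * ((1 + 2 * j : ℕ) : ZMod (2 * n)) =
          -(((n + 1) * (1 + 2 * j) : ℕ) : ZMod (2 * n)) := by
        rw [hqv]; push_cast; ring
      rw [h1]
      have hnat : (1 + 2 * (n / 2 - 1 - j)) + (n + 1) * (1 + 2 * j)
          = 2 * n * (1 + j) := by
        have e1 : (n + 1) * (1 + 2 * j) = 2 * (n * j) + n + 1 + 2 * j := by ring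
        have e2 : 2 * n * (1 + j) = 2 * (n * j) + 2 * n := by ring
        rw [e1, e2]
        generalize n * j = X
        omega
      exact (key_eq (2 * n) _ _ _ hnat).symm
    · intro j hj1 hj2
      rw [hcos, hcos, Set.image_singleton, Set.singleton_eq_singleton_iff]
      have h1 : -(q : ZMod (2 * n)) * ((1 + 2 * j : ℕ) : ZMod (2 * n)) =
          -(((n + 1) * (1 + 2 * j) : ℕ) : ZMod (2 * n)) := by
        rw [hqv]; push_cast; ring
      rw [h1]
      have hnat : (1 + 2 * (3 * n / 2 - 1 - j)) + (n + 1) * (1 + 2 * j)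
          = 2 * n * (2 + j) := by
        have e1 : (n + 1) * (1 + 2 * j) = 2 * (n * j) + n + 1 + 2 * j := by ring
        have e2 : 2 * n * (2 + j) = 2 * (n * j) + 4 * n := by ring
        rw [e1, e2]
        generalize n * j = X
        omega
      exact (key_eq (2 * n) _ _ _ hnat).symm
  · intro heγ
    obtain ⟨m, hm⟩ : ∃ m, γ = 2 * m := by
      obtain ⟨m, hm⟩ := heγ; exact ⟨m, by omega⟩
    have h2 : q = 2 * n * m + 1 := by rw [hq1, hm]; ring
    have hzero : ((2 * n * m : ℕ) : ZMod (2 * n)) = 0 := by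
      rw [Nat.cast_mul, ZMod.natCast_self, zero_mul]
    have hqv : (q : ZMod (2 * n)) = 1 := by
      rw [h2, Nat.cast_add, hzero, Nat.cast_one, zero_add]
    intro j hj
    rw [hcos, hcos, Set.image_singleton, Set.singleton_eq_singleton_iff]
    have h1 : -(q : ZMod (2 * n)) * ((1 + 2 * j : ℕ) : ZMod (2 * n)) =
        -(((1 + 2 * j) : ℕ) : ZMod (2 * n)) := by
      rw [hqv]; ring
    rw [h1]
    have hnat : (1 + 2 * (n - 1 - j)) + (1 + 2 * j) = 2 * n * 1 := by omega
    exact (key_eq (2 * n) _ _ _ hnat).symm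
end

section
/- Let q be an odd prime power with q ≡ 1 (mod 4), let γ be an even positive divisor of q - 1, and set n = (q-1)/γ with n > 2 and n even. Then for every integer l with 0 ≤ l and 2γl ≤ q - 4γ - 1 there exists a negacyclic Hermitian LCD code over F_{q²} of length n, dimension n - 2l - 2 and minimum distance exactly 2l + 3; in particular this code is MDS. -/
open Finset

/-!
Fix a primitive `2n`-th root of unity `ζ ∈ E`; it exists because `2n ∣ q - 1 ∣ q² - 1`, and it
lies in `𝔽_q`, i.e. `ζ ^ q = ζ`. The vectors `w_k = (ζ ^ ((2k+1) i))_i` are eigenvectors of the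
negacyclic shift and satisfy `w_k ⬝ᵥ w_m = n` if `n ∣ k + m + 1` and `0` otherwise, which yields a
discrete Fourier inversion formula. The span `C` of the `w_k` with `l + 1 ≤ k ≤ n - l - 2` is
therefore negacyclic of dimension `n - 2l - 2`, and Fourier inversion shows that `C` consists
exactly of the words whose polynomial vanishes at the `2l + 2` consecutive roots `ζ ^ (2j+1)`,
`-l - 1 ≤ j ≤ l`. A Vandermonde argument (the BCH bound) then gives weight at least `2l + 3`, which
is attained by the coefficients of `∏ (X - ζ ^ (2j+1))`. Since the generators `w_k` have entries
fixed by `x ↦ x ^ q`, a word of `C` Hermitian-orthogonal to `C` has all Fourier coefficients zero.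
-/

open Polynomial

theorem Finset.eq_zero_of_forall_sum_mul_pow_eq_zero {ι R : Type*} [CommRing R] [IsDomain R]
    (s : Finset ι) {f v : ι → R} (hf : Set.InjOn f s)
    (h : ∀ j < s.card, ∑ i ∈ s, v i * f i ^ j = 0) : ∀ i ∈ s, v i = 0 := by
  set e := s.equivFin.symm
  have hv := Matrix.eq_zero_of_forall_pow_sum_mul_pow_eq_zero (f := fun a => f (e a))
    (v := fun a => v (e a))
    (fun a b hab => e.injective (Subtype.ext (hf (e a).2 (e b).2 hab)))
    fun j => by
      rw [e.sum_comp (fun x : s => v x * f x ^ (j : ℕ)),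
        Finset.sum_coe_sort s (fun i => v i * f i ^ (j : ℕ))]
      exact h j j.isLt
  intro i hi
  simpa using congrFun hv (e.symm ⟨i, hi⟩)

section NegacyclicShift

variable {F : Type*} [Field F] {n : ℕ}

def negashiftLinearMap : (Fin n → F) →ₗ[F] (Fin n → F) where
  toFun := negashift
  map_add' x y := by
    funext i
    simp only [negashift, Pi.add_apply]
    split_ifs
    · exact neg_add _ _
    · rfl
  map_smul' a x := by
    funext i
    simp only [negashift, Pi.smul_apply, smul_eq_mul, RingHom.id_apply]
    split_ifs
    · exact mul_neg _ _ |>.symm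
    · rfl

theorem isNegacyclic_span_of_forall_negashift_eq_smul {s : Set (Fin n → F)}
    (hs : ∀ v ∈ s, ∃ a : F, negashift v = a • v) : IsNegacyclic (Submodule.span F s) := by
  suffices Submodule.span F s ≤ (Submodule.span F s).comap negashiftLinearMap from
    fun c hc => this hc
  refine Submodule.span_le.mpr fun v hv => ?_
  obtain ⟨a, ha⟩ := hs v hv
  change negashift v ∈ Submodule.span F s
  rw [ha]
  exact Submodule.smul_mem _ a (Submodule.subset_span hv)

end NegacyclicShift

section RootVectors

variable {E : Type*} [Field E] {n : ℕ} {ζ : E}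

/-- For a primitive `2n`-th root `ζ`, `c ⬝ᵥ evalVec ζ n k` is the value of `∑ cᵢ Xⁱ` at the root
`ζ ^ (2k + 1)` of `Xⁿ + 1`. -/
def evalVec (ζ : E) (n : ℕ) (k : ℤ) : Fin n → E :=
  fun i => ζ ^ ((2 * k + 1) * (i : ℕ))

theorem IsPrimitiveRoot.sum_range_zpow_two_mul (hζ : IsPrimitiveRoot ζ (2 * n)) (a : ℤ) :
    ∑ i ∈ range n, ζ ^ (2 * a * i) = if (n : ℤ) ∣ a then (n : E) else 0 := by
  set r := ζ ^ (2 * a)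
  have hr : ∀ i : ℕ, ζ ^ (2 * a * i) = r ^ i := fun i => by rw [zpow_mul, zpow_natCast]
  have hr_eq_one : r = 1 ↔ (n : ℤ) ∣ a := by
    rw [hζ.zpow_eq_one_iff_dvd, Nat.cast_mul, Nat.cast_two, mul_dvd_mul_iff_left two_ne_zero]
  simp only [hr]
  split_ifs with ha
  · simp [hr_eq_one.mpr ha]
  · have hrn : r ^ n = 1 := by
      rw [← hr, hζ.zpow_eq_one_iff_dvd]
      exact ⟨a, by push_cast; ring⟩
    rw [geom_sum_eq (mt hr_eq_one.mp ha), hrn, sub_self, zero_div]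

theorem IsPrimitiveRoot.zpow_mul_zpow [NeZero n] (hζ : IsPrimitiveRoot ζ (2 * n)) (a b : ℤ) :
    ζ ^ a * ζ ^ b = ζ ^ (a + b) :=
  (zpow_add₀ (hζ.ne_zero (by simp [NeZero.ne n])) a b).symm

theorem dotProduct_evalVec [NeZero n] (hζ : IsPrimitiveRoot ζ (2 * n)) (k m : ℤ) :
    evalVec ζ n k ⬝ᵥ evalVec ζ n m = if (n : ℤ) ∣ k + m + 1 then (n : E) else 0 := by
  rw [← hζ.sum_range_zpow_two_mul, ← Fin.sum_univ_eq_sum_range]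
  refine Finset.sum_congr rfl fun i _ => ?_
  rw [evalVec, evalVec, hζ.zpow_mul_zpow]
  ring_nf

theorem evalVec_add_self [NeZero n] (hζ : IsPrimitiveRoot ζ (2 * n)) (k : ℤ) :
    evalVec ζ n (k + n) = evalVec ζ n k := by
  funext i
  simp only [evalVec]
  rw [show (2 * (k + n) + 1) * ((i : ℕ) : ℤ) = (2 * k + 1) * (i : ℕ) + (2 * n : ℕ) * (i : ℕ) by
    push_cast; ring]
  rw [← hζ.zpow_mul_zpow, zpow_mul ζ (2 * n : ℕ), hζ.zpow_eq_one, one_zpow, mul_one]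

theorem IsPrimitiveRoot.pow_eq_neg_one [NeZero n] (hζ : IsPrimitiveRoot ζ (2 * n)) :
    ζ ^ n = -1 :=
  (hζ.pow (by simp [Nat.pos_of_neZero]) (mul_comm 2 n)).eq_neg_one_of_two_right

theorem negashift_evalVec [NeZero n] (hζ : IsPrimitiveRoot ζ (2 * n)) (k : ℤ) :
    negashift (evalVec ζ n k) = ζ ^ (-(2 * k + 1)) • evalVec ζ n k := by
  funext i
  simp only [negashift, evalVec, Pi.smul_apply, smul_eq_mul, hζ.zpow_mul_zpow]
  split_ifs with hi
  · rw [hi, Nat.cast_zero, mul_zero, add_zero, Nat.cast_sub NeZero.one_le, Nat.cast_one,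
      show (2 * k + 1) * ((n : ℤ) - 1) = n * (2 * k + 1) + -(2 * k + 1) by ring,
      ← hζ.zpow_mul_zpow, zpow_mul, zpow_natCast, hζ.pow_eq_neg_one, Odd.neg_one_zpow ⟨k, rfl⟩,
      neg_one_mul, neg_neg]
  · congr 1
    push_cast [Nat.one_le_iff_ne_zero.mpr hi]
    ring

theorem IsPrimitiveRoot.natCast_ne_zero [NeZero n] (hζ : IsPrimitiveRoot ζ (2 * n)) :
    (n : E) ≠ 0 := by
  have := hζ.neZero'
  have h2n : ((2 * n : ℕ) : E) ≠ 0 := NeZero.ne _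
  push_cast at h2n
  exact right_ne_zero_of_mul h2n

theorem sum_smul_evalVec_neg_sub_one [NeZero n] (hζ : IsPrimitiveRoot ζ (2 * n))
    (x : Fin n → E) :
    ∑ m ∈ range n, (x ⬝ᵥ evalVec ζ n m) • evalVec ζ n (-1 - m) = (n : E) • x := by
  funext i₀
  have hterm : ∀ (i : Fin n) (m : ℕ), evalVec ζ n m i * evalVec ζ n (-1 - m) i₀ =
      ζ ^ ((i : ℕ) - (i₀ : ℕ) : ℤ) * ζ ^ (2 * ((i : ℕ) - (i₀ : ℕ) : ℤ) * m) := fun i m => by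
    rw [evalVec, evalVec, hζ.zpow_mul_zpow, hζ.zpow_mul_zpow]
    ring_nf
  have hinner : ∀ i : Fin n, ∑ m ∈ range n, x i * evalVec ζ n m i * evalVec ζ n (-1 - m) i₀ =
      if i = i₀ then (n : E) * x i₀ else 0 := fun i => by
    simp only [mul_assoc (x _), hterm, ← Finset.mul_sum, hζ.sum_range_zpow_two_mul]
    by_cases hii : i = i₀
    · simp [hii, mul_comm]
    · have hndvd : ¬(n : ℤ) ∣ (i : ℕ) - (i₀ : ℕ) := fun hdvd => hii (Fin.ext (by
        have := Int.eq_zero_of_abs_lt_dvd hdvd (abs_lt.mpr ⟨by omega, by omega⟩)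
        omega))
      simp [hii, hndvd]
  simp only [Finset.sum_apply, Pi.smul_apply, smul_eq_mul, dotProduct, Finset.sum_mul]
  rw [Finset.sum_comm, Finset.sum_congr rfl fun i _ => hinner i, Finset.sum_ite_eq']
  simp

theorem linearIndependent_evalVec [NeZero n] (hζ : IsPrimitiveRoot ζ (2 * n)) {s : Set ℤ}
    (hs : s ⊆ Set.Ico 0 n) : LinearIndependent E (fun k : s => evalVec ζ n k) := by
  rw [linearIndependent_iff']
  intro t g hg k₀ hk₀
  have hdot := congrArg (· ⬝ᵥ evalVec ζ n (n - 1 - k₀)) hg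
  simp only [sum_dotProduct, smul_dotProduct, dotProduct_evalVec hζ, zero_dotProduct,
    smul_eq_mul] at hdot
  rw [Finset.sum_eq_single k₀ (fun k _ hk => ?_) (absurd hk₀)] at hdot
  · simpa [hζ.natCast_ne_zero, show (n : ℤ) ∣ k₀ + (n - 1 - k₀) + 1 from ⟨1, by ring⟩] using hdot
  · have := hs k.2
    have := hs k₀.2
    simp only [Set.mem_Ico] at *
    rw [if_neg, mul_zero]
    intro hdvd
    have := Int.eq_zero_of_abs_lt_dvd (dvd_sub hdvd (dvd_refl (n : ℤ)))
      (abs_lt.mpr ⟨by omega, by omega⟩)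
    exact hk (Subtype.ext (by omega))

end RootVectors

theorem FiniteField.exists_isPrimitiveRoot {K : Type*} [Field K] [Fintype K] {d : ℕ}
    (hd0 : 0 < d) (hd : d ∣ Fintype.card K - 1) : ∃ ζ : K, IsPrimitiveRoot ζ d := by
  classical
  have hcard : #{a : Kˣ | orderOf a = d} = d.totient :=
    IsCyclic.card_orderOf_eq_totient (by rwa [Fintype.card_units])
  obtain ⟨a, ha⟩ := Finset.card_pos.mp (hcard ▸ Nat.totient_pos.mpr hd0)
  exact ⟨a, IsPrimitiveRoot.coe_units_iff.mpr ((mem_filter.mp ha).2 ▸ IsPrimitiveRoot.orderOf a)⟩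

section Code

variable {E : Type*} [Field E] {n l : ℕ} {ζ : E}

def negacyclicBCHCode (ζ : E) (n l : ℕ) : Submodule E (Fin n → E) :=
  Submodule.span E (evalVec ζ n '' Set.Icc ((l : ℤ) + 1) (n - l - 2))

theorem isNegacyclic_negacyclicBCHCode [NeZero n] (hζ : IsPrimitiveRoot ζ (2 * n)) :
    IsNegacyclic (negacyclicBCHCode ζ n l) :=
  isNegacyclic_span_of_forall_negashift_eq_smul <| by
    rintro _ ⟨k, -, rfl⟩
    exact ⟨_, negashift_evalVec hζ k⟩

theorem dotProduct_evalVec_eq_zero_of_mem [NeZero n] (hζ : IsPrimitiveRoot ζ (2 * n))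
    {c : Fin n → E} (hc : c ∈ negacyclicBCHCode ζ n l) {j : ℤ}
    (hj : j ∈ Set.Icc (-(l : ℤ) - 1) l) : c ⬝ᵥ evalVec ζ n j = 0 := by
  induction hc using Submodule.span_induction with
  | mem x hx =>
    obtain ⟨k, hk, rfl⟩ := hx
    rw [dotProduct_evalVec hζ, if_neg]
    intro hdvd
    simp only [Set.mem_Icc] at hj hk
    have := Int.le_of_dvd (by omega) hdvd
    omega
  | zero => exact zero_dotProduct _
  | add x y _ _ hx hy => rw [add_dotProduct, hx, hy, add_zero]
  | smul a x _ hx => rw [smul_dotProduct, hx, smul_zero]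

theorem dotProduct_evalVec_eq_zero_of_forall [NeZero n] (hζ : IsPrimitiveRoot ζ (2 * n))
    {c : Fin n → E} (hc : ∀ j ∈ Set.Icc (-(l : ℤ) - 1) l, c ⬝ᵥ evalVec ζ n j = 0) {m : ℕ}
    (hm : m < n) (hmT : (m : ℤ) ∉ Set.Icc ((l : ℤ) + 1) (n - l - 2)) :
    c ⬝ᵥ evalVec ζ n m = 0 := by
  simp only [Set.mem_Icc, not_and_or, not_le] at hmT
  by_cases hml : m ≤ l
  · exact hc m ⟨by omega, by exact_mod_cast hml⟩
  · rw [← sub_add_cancel (m : ℤ) n, evalVec_add_self hζ]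
    exact hc _ ⟨by omega, by omega⟩

theorem mem_negacyclicBCHCode_iff [NeZero n] (hζ : IsPrimitiveRoot ζ (2 * n)) {c : Fin n → E} :
    c ∈ negacyclicBCHCode ζ n l ↔ ∀ j ∈ Set.Icc (-(l : ℤ) - 1) l, c ⬝ᵥ evalVec ζ n j = 0 := by
  refine ⟨fun hc j hj => dotProduct_evalVec_eq_zero_of_mem hζ hc hj, fun hc => ?_⟩
  rw [← Submodule.smul_mem_iff _ hζ.natCast_ne_zero, ← sum_smul_evalVec_neg_sub_one hζ]
  refine Submodule.sum_mem _ fun m hm => ?_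
  rw [Finset.mem_range] at hm
  by_cases hmT : (m : ℤ) ∈ Set.Icc ((l : ℤ) + 1) (n - l - 2)
  · refine Submodule.smul_mem _ _ (Submodule.subset_span ⟨n - 1 - m, ?_, ?_⟩)
    · simp only [Set.mem_Icc] at hmT ⊢
      omega
    · rw [← evalVec_add_self hζ (-1 - m)]
      ring_nf
  · rw [dotProduct_evalVec_eq_zero_of_forall hζ hc hm hmT, zero_smul]
    exact zero_mem _

theorem finrank_negacyclicBCHCode [NeZero n] (hζ : IsPrimitiveRoot ζ (2 * n)) :
    Module.finrank E (negacyclicBCHCode ζ n l) = n - 2 * l - 2 := by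
  rw [negacyclicBCHCode, Set.image_eq_range,
    finrank_span_eq_card (linearIndependent_evalVec hζ ?_)]
  · rw [← Set.toFinset_card, Set.toFinset_Icc, Int.card_Icc]
    omega
  · intro k hk
    simp only [Set.mem_Icc, Set.mem_Ico] at hk ⊢
    omega

theorem isHermLCD_negacyclicBCHCode [NeZero n] (hζ : IsPrimitiveRoot ζ (2 * n)) {q : ℕ}
    (hq : ζ ^ q = ζ) : IsHermLCD q (negacyclicBCHCode ζ n l) := by
  intro x hx hperp
  have hcoeff : ∀ m ∈ range n, x ⬝ᵥ evalVec ζ n m = 0 := by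
    intro m hm
    rw [Finset.mem_range] at hm
    by_cases hmT : (m : ℤ) ∈ Set.Icc ((l : ℤ) + 1) (n - l - 2)
    · have hfix : ∀ i, evalVec ζ n m i ^ q = evalVec ζ n m i := fun i => by
        rw [evalVec, ← zpow_natCast, ← zpow_mul, mul_comm, zpow_mul, zpow_natCast, hq]
      simpa [dotProduct, hfix] using hperp _ (Submodule.subset_span ⟨m, hmT, rfl⟩)
    · exact dotProduct_evalVec_eq_zero_of_forall hζ ((mem_negacyclicBCHCode_iff hζ).mp hx) hm hmT
  have hnx : (n : E) • x = 0 := by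
    rw [← sum_smul_evalVec_neg_sub_one hζ]
    exact Finset.sum_eq_zero fun m hm => by rw [hcoeff m hm, zero_smul]
  exact (smul_eq_zero.mp hnx).resolve_left hζ.natCast_ne_zero

theorem lt_wt_of_forall_dotProduct_evalVec_eq_zero [NeZero n] (hζ : IsPrimitiveRoot ζ (2 * n))
    {c : Fin n → E} (hc : c ≠ 0) (j₀ : ℤ) {δ : ℕ}
    (h : ∀ j < δ, c ⬝ᵥ evalVec ζ n (j₀ + j) = 0) : δ < wt c := by
  classical
  by_contra! hwt
  set S := univ.filter fun i => c i ≠ 0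
  have hS : S.card = wt c := by rw [wt]
  have hζ2 : IsPrimitiveRoot (ζ ^ 2) n := hζ.pow (by simp [Nat.pos_of_neZero]) rfl
  have hinj : Set.InjOn (fun i : Fin n => (ζ ^ 2) ^ (i : ℕ)) S :=
    fun i _ j _ hij => Fin.ext (hζ2.pow_inj i.isLt j.isLt hij)
  have hsum : ∀ j < S.card,
      ∑ i ∈ S, c i * ζ ^ ((2 * j₀ + 1) * (i : ℕ)) * ((ζ ^ 2) ^ (i : ℕ)) ^ j = 0 := by
    intro j hj
    rw [Finset.sum_filter_of_ne fun i _ hi => left_ne_zero_of_mul (left_ne_zero_of_mul hi),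
      ← h j (by omega)]
    refine Finset.sum_congr rfl fun i _ => ?_
    rw [mul_assoc, ← pow_mul, ← pow_mul, ← zpow_natCast, hζ.zpow_mul_zpow]
    simp only [evalVec]
    push_cast
    ring_nf
  obtain ⟨i₀, hi₀⟩ : ∃ i, c i ≠ 0 := Function.ne_iff.mp hc
  have := S.eq_zero_of_forall_sum_mul_pow_eq_zero hinj hsum i₀ (by simpa [S] using hi₀)
  exact hi₀ ((mul_eq_zero.mp this).resolve_right
    (zpow_ne_zero _ (hζ.ne_zero (by simp [NeZero.ne n]))))

theorem two_mul_add_three_le_wt_of_mem [NeZero n] (hζ : IsPrimitiveRoot ζ (2 * n))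
    {c : Fin n → E} (hc : c ∈ negacyclicBCHCode ζ n l) (hc0 : c ≠ 0) : 2 * l + 3 ≤ wt c :=
  lt_wt_of_forall_dotProduct_evalVec_eq_zero (δ := 2 * l + 2) hζ hc0 (-(l : ℤ) - 1)
    fun j hj => (mem_negacyclicBCHCode_iff hζ).mp hc _ ⟨by omega, by omega⟩

theorem coeff_dotProduct_evalVec {p : E[X]} (hp : p.natDegree < n) (j : ℤ) :
    (fun i : Fin n => p.coeff i) ⬝ᵥ evalVec ζ n j = p.eval (ζ ^ (2 * j + 1)) := by
  rw [eval_eq_sum_range' hp, ← Fin.sum_univ_eq_sum_range]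
  refine Finset.sum_congr rfl fun i _ => ?_
  rw [evalVec, zpow_mul, zpow_natCast]

theorem wt_coeff_le (p : E[X]) : wt (fun i : Fin n => p.coeff i) ≤ p.natDegree + 1 := by
  classical
  calc wt (fun i : Fin n => p.coeff i) ≤ (range (p.natDegree + 1)).card :=
        Finset.card_le_card_of_injOn (fun i => (i : ℕ))
          (fun i hi => mem_range.mpr <| Nat.lt_succ_of_le <|
            le_natDegree_of_ne_zero (mem_filter.mp hi).2)
          fun a _ b _ hab => Fin.ext hab
    _ = p.natDegree + 1 := card_range _

theorem hasMinDist_negacyclicBCHCode [NeZero n] (hζ : IsPrimitiveRoot ζ (2 * n))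
    (hl : 2 * l + 3 ≤ n) :
    HasMinDist (negacyclicBCHCode ζ n l : Set (Fin n → E)) (2 * l + 3) := by
  set g : E[X] := ∏ j ∈ Finset.Icc (-(l : ℤ) - 1) l, (X - C (ζ ^ (2 * j + 1)))
  have hg_monic : g.Monic := monic_prod_of_monic _ _ fun j _ => monic_X_sub_C _
  have hg_deg : g.natDegree = 2 * l + 2 := by
    rw [natDegree_prod_of_monic _ _ fun j _ => monic_X_sub_C _]
    simp only [natDegree_X_sub_C, sum_const, Int.card_Icc, smul_eq_mul, mul_one]
    omega
  set c : Fin n → E := fun i => g.coeff i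
  have hc : c ∈ negacyclicBCHCode ζ n l := (mem_negacyclicBCHCode_iff hζ).mpr fun j hj => by
    rw [coeff_dotProduct_evalVec (by omega), eval_prod]
    exact Finset.prod_eq_zero (Finset.mem_Icc.mpr hj) (by simp)
  have hc0 : c ≠ 0 := fun h => by
    simpa [c, ← hg_deg, hg_monic.coeff_natDegree] using congrFun h ⟨2 * l + 2, by omega⟩
  refine ⟨⟨c, hc, hc0, le_antisymm ?_ (two_mul_add_three_le_wt_of_mem hζ hc hc0)⟩, ?_⟩
  · exact (wt_coeff_le g).trans (by omega)
  · rintro _ ⟨c', hc', hc'0, rfl⟩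
    exact two_mul_add_three_le_wt_of_mem hζ hc' hc'0

end Code

theorem stmt_11_general (q : ℕ) (E : Type) [Field E] [Fintype E] (hE : Fintype.card E = q ^ 2)
    (γ : ℕ) (hγ : 0 < γ) (hγpar : Even γ) (hdvd : γ ∣ q - 1)
    (n : ℕ) (hn : n = (q - 1) / γ)
    (l : ℕ) (hl : 2 * γ * l + 4 * γ + 1 ≤ q) :
    ∃ C : Submodule E (Fin n → E),
      IsNegacyclic C ∧ IsHermLCD q C ∧
      Module.finrank E C = n - 2 * l - 2 ∧
      HasMinDist (C : Set (Fin n → E)) (2 * l + 3) := by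
  have hγn : γ * n = q - 1 := by rw [hn, Nat.mul_div_cancel' hdvd]
  have h2n : 2 * n ∣ q - 1 := by
    obtain ⟨γ', rfl⟩ := hγpar
    exact ⟨γ', by rw [← hγn]; ring⟩
  have hln : 2 * l + 4 ≤ n := Nat.le_of_mul_le_mul_left (by
    have : γ * (2 * l + 4) = 2 * γ * l + 4 * γ := by ring
    omega) hγ
  have : NeZero n := ⟨by omega⟩
  obtain ⟨ζ, hζ⟩ := FiniteField.exists_isPrimitiveRoot (K := E) (d := 2 * n) (by omega)
    (hE ▸ h2n.trans (by simpa using Nat.sub_dvd_pow_sub_pow q 1 2))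
  have hζq : ζ ^ q = ζ := by
    rw [← Nat.sub_add_cancel (show 1 ≤ q by omega), pow_succ,
      (hζ.pow_eq_one_iff_dvd _).mpr h2n, one_mul]
  exact ⟨negacyclicBCHCode ζ n l, isNegacyclic_negacyclicBCHCode hζ,
    isHermLCD_negacyclicBCHCode hζ hζq, finrank_negacyclicBCHCode hζ,
    hasMinDist_negacyclicBCHCode hζ (by omega)⟩

theorem stmt_11 (q : ℕ) (hq : IsPrimePow q) (hqodd : Odd q) (hmod : q % 4 = 1)
    (E : Type) [Field E] [Fintype E] (hE : Fintype.card E = q ^ 2)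
    (γ : ℕ) (hγ : 0 < γ) (hγpar : Even γ) (hdvd : γ ∣ q - 1)
    (n : ℕ) (hn : n = (q - 1) / γ) (hn2 : 2 < n) (hneven : Even n)
    (l : ℕ) (hl : 2 * γ * l + 4 * γ + 1 ≤ q) :
    ∃ C : Submodule E (Fin n → E),
      IsNegacyclic C ∧ IsHermLCD q C ∧
      Module.finrank E C = n - 2 * l - 2 ∧
      HasMinDist (C : Set (Fin n → E)) (2 * l + 3) :=
  stmt_11_general q E hE γ hγ hγpar hdvd n hn l hl
end

section
/- Let q be an odd prime power with q ≡ 3 (mod 4) and set n = q² + 1. For q²-cyclotomic cosets modulo 2n: (1) for j = (q²-1)/4 one has C_{1+2j} = -q·C_{1+2j}; (2) for all integers j, k with (q-1)(q-3)/4 ≤ j < (q²-1)/4 and (q-1)(q-3)/4 ≤ k < (q²-1)/4, one has C_{1+2k} ≠ -q·C_{1+2j}. -/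
theorem stmt_17 (q : ℕ) (hq : IsPrimePow q) (hqodd : Odd q) (hmod : q % 4 = 3) :
    (cycCoset (q ^ 2) (2 * (q ^ 2 + 1))
        ((1 + 2 * ((q ^ 2 - 1) / 4) : ℕ) : ZMod (2 * (q ^ 2 + 1))) =
      (fun x => -(q : ZMod (2 * (q ^ 2 + 1))) * x) ''
        cycCoset (q ^ 2) (2 * (q ^ 2 + 1))
          ((1 + 2 * ((q ^ 2 - 1) / 4) : ℕ) : ZMod (2 * (q ^ 2 + 1)))) ∧
    (∀ j k : ℕ, (q - 1) * (q - 3) / 4 ≤ j → j < (q ^ 2 - 1) / 4 →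
        (q - 1) * (q - 3) / 4 ≤ k → k < (q ^ 2 - 1) / 4 →
      cycCoset (q ^ 2) (2 * (q ^ 2 + 1)) ((1 + 2 * k : ℕ) : ZMod (2 * (q ^ 2 + 1))) ≠
        (fun x => -(q : ZMod (2 * (q ^ 2 + 1))) * x) ''
          cycCoset (q ^ 2) (2 * (q ^ 2 + 1)) ((1 + 2 * j : ℕ) : ZMod (2 * (q ^ 2 + 1)))) := by
  clear hq hqodd
  obtain ⟨r, rfl⟩ : ∃ r, q = 4 * r + 3 := ⟨q / 4, by omega⟩
  set N : ℕ := 2 * ((4 * r + 3) ^ 2 + 1) with hN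
  have hb : (((4 * r + 3) ^ 2 : ℕ) : ZMod N) = ((4 * r + 3 : ℕ) : ZMod N) ^ 2 := by
    push_cast; ring
  have h4 : ((4 * r + 3 : ℕ) : ZMod N) ^ 4 = 1 := by
    have h1 : (4 * r + 3) ^ 4 = (8 * r ^ 2 + 12 * r + 4) * N + 1 := by rw [hN]; ring
    have h2 : (((4 * r + 3) ^ 4 : ℕ) : ZMod N) = 1 := by
      rw [h1]; push_cast; simp
    calc ((4 * r + 3 : ℕ) : ZMod N) ^ 4 = (((4 * r + 3) ^ 4 : ℕ) : ZMod N) := by push_cast; ring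
      _ = 1 := h2
  have hMb : ((4 * r + 3) ^ 2 - 1) / 4 = 4 * r ^ 2 + 6 * r + 2 := by
    have e1 : (4 * r + 3) ^ 2 - 1 = 4 * (4 * r ^ 2 + 6 * r + 2) := by
      have h : (4 * r + 3) ^ 2 = 4 * (4 * r ^ 2 + 6 * r + 2) + 1 := by ring
      rw [h]
      simp
    rw [e1, Nat.mul_div_cancel_left _ (by norm_num : 0 < 4)]
  constructor
  · -- part 1
    rw [hMb]
    have hbase : (1 + 2 * (4 * r ^ 2 + 6 * r + 2)) = 8 * r ^ 2 + 12 * r + 5 := by ring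
    rw [hbase]
    set s : ZMod N := ((8 * r ^ 2 + 12 * r + 5 : ℕ) : ZMod N) with hs
    have hfix : ((4 * r + 3 : ℕ) : ZMod N) ^ 2 * s = s := by
      rw [hs]
      have h1 : (4 * r + 3) ^ 2 * (8 * r ^ 2 + 12 * r + 5)
          = (4 * r ^ 2 + 6 * r + 2) * N + (8 * r ^ 2 + 12 * r + 5) := by rw [hN]; ring
      calc ((4 * r + 3 : ℕ) : ZMod N) ^ 2 * ((8 * r ^ 2 + 12 * r + 5 : ℕ) : ZMod N)
          = (((4 * r + 3) ^ 2 * (8 * r ^ 2 + 12 * r + 5) : ℕ) : ZMod N) := by push_cast; ring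
        _ = (((4 * r ^ 2 + 6 * r + 2) * N + (8 * r ^ 2 + 12 * r + 5) : ℕ) : ZMod N) := by
            rw [h1]
        _ = ((8 * r ^ 2 + 12 * r + 5 : ℕ) : ZMod N) := by push_cast; simp
    have hneg : -((4 * r + 3 : ℕ) : ZMod N) * s = s := by
      have h1 : (4 * r + 3) * (8 * r ^ 2 + 12 * r + 5) + (8 * r ^ 2 + 12 * r + 5)
          = (r + 1) * N := by rw [hN]; ring
      have h2 : (((4 * r + 3) * (8 * r ^ 2 + 12 * r + 5) + (8 * r ^ 2 + 12 * r + 5) : ℕ)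
          : ZMod N) = 0 := by rw [h1]; push_cast; simp
      rw [hs]
      push_cast at h2 ⊢
      linear_combination -h2
    have hpow : ∀ i : ℕ, s * (((4 * r + 3) ^ 2 : ℕ) : ZMod N) ^ i = s := by
      intro i; induction i with
      | zero => simp
      | succ m ih =>
        rw [pow_succ, ← mul_assoc, ih, hb, mul_comm]
        exact hfix
    ext x
    simp only [cycCoset, Set.mem_setOf_eq, Set.mem_image]
    constructor
    · rintro ⟨i, rfl⟩
      refine ⟨s, ⟨0, by simp⟩, ?_⟩
      rw [hpow i]
      exact hneg
    · rintro ⟨y, ⟨i, rfl⟩, rfl⟩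
      refine ⟨0, ?_⟩
      rw [hpow i, pow_zero, mul_one, hneg]
  · -- part 2
    intro j k hj1 hj2 hk1 hk2 heq
    have hLb : (4 * r + 3 - 1) * (4 * r + 3 - 3) / 4 = 4 * r ^ 2 + 2 * r := by
      have e1 : 4 * r + 3 - 1 = 4 * r + 2 := by omega
      have e2 : 4 * r + 3 - 3 = 4 * r := by omega
      rw [e1, e2]
      have e3 : (4 * r + 2) * (4 * r) = 4 * (4 * r ^ 2 + 2 * r) := by ring
      rw [e3, Nat.mul_div_cancel_left _ (by norm_num : 0 < 4)]
    rw [hLb] at hj1 hk1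
    rw [hMb] at hj2 hk2
    have hj1' : 4 * (r : ℤ) ^ 2 + 2 * (r : ℤ) ≤ (j : ℤ) := by exact_mod_cast hj1
    have hk1' : 4 * (r : ℤ) ^ 2 + 2 * (r : ℤ) ≤ (k : ℤ) := by exact_mod_cast hk1
    have hj2' : (j : ℤ) ≤ 4 * (r : ℤ) ^ 2 + 6 * (r : ℤ) + 1 := by
      have : j ≤ 4 * r ^ 2 + 6 * r + 1 := by omega
      exact_mod_cast this
    have hk2' : (k : ℤ) ≤ 4 * (r : ℤ) ^ 2 + 6 * (r : ℤ) + 1 := by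
      have : k ≤ 4 * r ^ 2 + 6 * r + 1 := by omega
      exact_mod_cast this
    have hmem : ((1 + 2 * k : ℕ) : ZMod N) ∈
        cycCoset ((4 * r + 3) ^ 2) N ((1 + 2 * k : ℕ) : ZMod N) := ⟨0, by simp⟩
    rw [heq] at hmem
    obtain ⟨y, ⟨i, rfl⟩, hfy⟩ := hmem
    rcases Nat.even_or_odd i with ⟨m, hm⟩ | ⟨m, hm⟩
    · -- even exponent : coset element is -q * b
      have hc : (((4 * r + 3) ^ 2 : ℕ) : ZMod N) ^ i = 1 := by
        subst hm
        rw [hb, ← pow_mul]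
        have e : 2 * (m + m) = 4 * m := by ring
        rw [e, pow_mul, h4, one_pow]
      simp only [hc, mul_one] at hfy
      have hz : (((1 + 2 * k) + (4 * r + 3) * (1 + 2 * j) : ℕ) : ZMod N) = 0 := by
        push_cast at hfy ⊢
        linear_combination -hfy
      rw [ZMod.natCast_eq_zero_iff] at hz
      obtain ⟨t, ht⟩ := hz
      rw [hN] at ht
      have htz : ((1 : ℤ) + 2 * (k : ℤ)) + (4 * (r : ℤ) + 3) * (1 + 2 * (j : ℤ))
          = (2 * ((4 * (r : ℤ) + 3) ^ 2 + 1)) * (t : ℤ) := by exact_mod_cast ht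
      rcases le_or_gt (t : ℤ) (r : ℤ) with h | h
      · linarith [mul_le_mul_of_nonneg_left h
            (show (0:ℤ) ≤ 2 * ((4 * (r : ℤ) + 3) ^ 2 + 1) by positivity),
          mul_le_mul_of_nonneg_left hj1'
            (show (0:ℤ) ≤ 8 * (r : ℤ) + 6 by positivity)]
      · have h' : (r : ℤ) + 1 ≤ (t : ℤ) := h
        linarith [mul_le_mul_of_nonneg_left h'
            (show (0:ℤ) ≤ 2 * ((4 * (r : ℤ) + 3) ^ 2 + 1) by positivity),
          mul_le_mul_of_nonneg_left hj2'
            (show (0:ℤ) ≤ 8 * (r : ℤ) + 6 by positivity)]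
    · -- odd exponent : coset element is -q^3 * b
      have hc : (((4 * r + 3) ^ 2 : ℕ) : ZMod N) ^ i = ((4 * r + 3 : ℕ) : ZMod N) ^ 2 := by
        subst hm
        rw [hb, ← pow_mul]
        have e : 2 * (2 * m + 1) = 4 * m + 2 := by ring
        rw [e, pow_add, pow_mul, h4, one_pow, one_mul]
      simp only [hc] at hfy
      have hz : (((1 + 2 * k) + (4 * r + 3) ^ 3 * (1 + 2 * j) : ℕ) : ZMod N) = 0 := by
        push_cast at hfy ⊢
        linear_combination -hfy
      rw [ZMod.natCast_eq_zero_iff] at hz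
      obtain ⟨t, ht⟩ := hz
      rw [hN] at ht
      have htz : ((1 : ℤ) + 2 * (k : ℤ)) + (4 * (r : ℤ) + 3) ^ 3 * (1 + 2 * (j : ℤ))
          = (2 * ((4 * (r : ℤ) + 3) ^ 2 + 1)) * (t : ℤ) := by exact_mod_cast ht
      obtain ⟨w, hw⟩ : ∃ w : ℤ, w = (4 * (r : ℤ) + 3) * (1 + 2 * (j : ℤ)) - 2 * (t : ℤ) :=
        ⟨_, rfl⟩
      have hv : (4 * (r : ℤ) + 3) * (1 + 2 * (j : ℤ)) - (1 + 2 * (k : ℤ))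
          = (16 * (r : ℤ) ^ 2 + 24 * (r : ℤ) + 10) * w := by
        rw [hw]; linear_combination -htz
      have hwlow : 2 * (r : ℤ) - 1 < w := by
        by_contra hcon
        push_neg at hcon
        linarith [mul_le_mul_of_nonneg_left hcon
            (show (0:ℤ) ≤ 16 * (r : ℤ) ^ 2 + 24 * (r : ℤ) + 10 by positivity),
          mul_le_mul_of_nonneg_left hj1'
            (show (0:ℤ) ≤ 8 * (r : ℤ) + 6 by positivity)]
      have hwhigh : w < 2 * (r : ℤ) + 1 := by
        by_contra hcon
        push_neg at hcon
        linarith [mul_le_mul_of_nonneg_left hcon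
            (show (0:ℤ) ≤ 16 * (r : ℤ) ^ 2 + 24 * (r : ℤ) + 10 by positivity),
          mul_le_mul_of_nonneg_left hj2'
            (show (0:ℤ) ≤ 8 * (r : ℤ) + 6 by positivity)]
      have hw2r : w = 2 * (r : ℤ) := by omega
      rw [hw2r] at hw
      have h2 : 2 * ((t : ℤ) - 4 * ((r : ℤ) * (j : ℤ)) - 3 * (j : ℤ) - (r : ℤ)) = 3 := by
        linear_combination hw
      have hdvd : (2 : ℤ) ∣ 3 := ⟨_, h2.symm⟩
      norm_num at hdvd
end
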